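/- arXiv:2310.10234 — 5 statements merged into one kernel-verified Lean document; each statement's English description precedes it below -/
import Mathlib

section
/- Fix a real κ with 4 < κ < 8. For every α ∈ (0,1] and every x ∈ (0,1], one has α^{1−4/κ} · ∫₀^x (1−α·u)^{8/κ−2}·u^{−4/κ} du ≤ B(1−4/κ, 8/κ−1), where B is the Beta function; in particular the left-hand side integral is finite. -/
/-! The substitution `t = α u` turns `α ^ (1 - 4/κ) ∫₀^x (1 - α u)^(8/κ - 2) u^(-4/κ) du` into the
incomplete Beta integral `∫₀^(α x) t^(a-1) (1 - t)^(b-1) dt` with `a = 1 - 4/κ`, `b = 8/κ - 1`, both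
positive because `4 < κ < 8`. Since `α x ≤ 1` and the integrand is nonnegative, this is at most
the complete Beta integral `B(a, b)`. -/

open MeasureTheory ProbabilityTheory Set

section BetaIntegrand

variable {a b : ℝ}

lemma cpow_mul_one_sub_cpow_eq_ofReal {t : ℝ} (ht : t ∈ Ioc (0 : ℝ) 1) :
    (t : ℂ) ^ ((a : ℂ) - 1) * (1 - (t : ℂ)) ^ ((b : ℂ) - 1)
      = ((t ^ (a - 1) * (1 - t) ^ (b - 1) : ℝ) : ℂ) := by
  push_cast [Complex.ofReal_cpow ht.1.le, Complex.ofReal_cpow (sub_nonneg.2 ht.2)]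
  rfl

lemma intervalIntegrable_beta_integrand (ha : 0 < a) (hb : 0 < b) :
    IntervalIntegrable (fun t : ℝ => t ^ (a - 1) * (1 - t) ^ (b - 1)) volume 0 1 := by
  have hc := Complex.betaIntegral_convergent (u := a) (v := b) (by simpa) (by simpa)
  rw [intervalIntegrable_iff_integrableOn_Ioc_of_le zero_le_one] at hc ⊢
  have hc' := hc.congr_fun (fun t ht => cpow_mul_one_sub_cpow_eq_ofReal ht) measurableSet_Ioc
  simpa [IntegrableOn] using hc'.re

lemma integral_beta_integrand (ha : 0 < a) (hb : 0 < b) :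
    ∫ t in (0 : ℝ)..1, t ^ (a - 1) * (1 - t) ^ (b - 1) = beta a b := by
  have h : Complex.betaIntegral a b
      = ((∫ t in (0 : ℝ)..1, t ^ (a - 1) * (1 - t) ^ (b - 1) : ℝ) : ℂ) := by
    rw [Complex.betaIntegral, ← intervalIntegral.integral_ofReal]
    refine intervalIntegral.integral_congr_ae (Filter.Eventually.of_forall fun t ht => ?_)
    rw [uIoc_of_le zero_le_one] at ht
    exact cpow_mul_one_sub_cpow_eq_ofReal ht
  rw [beta_eq_betaIntegralReal a b ha hb, h, Complex.ofReal_re]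

lemma integral_beta_integrand_le_beta (ha : 0 < a) (hb : 0 < b) {y : ℝ} (hy₀ : 0 ≤ y)
    (hy₁ : y ≤ 1) : ∫ t in (0 : ℝ)..y, t ^ (a - 1) * (1 - t) ^ (b - 1) ≤ beta a b := by
  rw [← integral_beta_integrand ha hb]
  refine intervalIntegral.integral_mono_interval le_rfl hy₀ hy₁ ?_
    (intervalIntegrable_beta_integrand ha hb)
  filter_upwards [ae_restrict_mem measurableSet_Ioc] with t ht
  exact mul_nonneg (Real.rpow_nonneg ht.1.le _) (Real.rpow_nonneg (sub_nonneg.2 ht.2) _)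

variable {α x : ℝ}

lemma scaled_beta_integrand_eq (hα : 0 < α) {u : ℝ} (hu : 0 ≤ u) :
    (1 - α * u) ^ (b - 1) * u ^ (a - 1)
      = α ^ (1 - a) * ((α * u) ^ (a - 1) * (1 - α * u) ^ (b - 1)) := by
  rw [Real.mul_rpow hα.le hu, ← mul_assoc, ← mul_assoc, ← Real.rpow_add hα,
    show 1 - a + (a - 1) = 0 by ring, Real.rpow_zero, one_mul, mul_comm]

lemma intervalIntegrable_scaled_beta_integrand (ha : 0 < a) (hb : 0 < b) (hα : 0 < α)
    (hx : 0 ≤ x) (hαx : α * x ≤ 1) :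
    IntervalIntegrable (fun u : ℝ => (1 - α * u) ^ (b - 1) * u ^ (a - 1)) volume 0 x := by
  have h₁ : IntervalIntegrable (fun t : ℝ => t ^ (a - 1) * (1 - t) ^ (b - 1)) volume 0 (α * x) :=
    (intervalIntegrable_beta_integrand ha hb).mono_set <| by
      rw [uIcc_of_le (by positivity), uIcc_of_le zero_le_one]
      exact Icc_subset_Icc le_rfl hαx
  have h₂ := (h₁.comp_mul_left (c := α)).const_mul (α ^ (1 - a))
  rw [zero_div, mul_div_cancel_left₀ _ hα.ne'] at h₂
  refine h₂.congr fun u hu => ?_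
  rw [uIoc_of_le hx] at hu
  exact (scaled_beta_integrand_eq hα hu.1.le).symm

lemma rpow_mul_integral_scaled_beta_integrand (hα : 0 < α) (hx : 0 ≤ x) :
    α ^ a * ∫ u in (0 : ℝ)..x, (1 - α * u) ^ (b - 1) * u ^ (a - 1)
      = ∫ t in (0 : ℝ)..α * x, t ^ (a - 1) * (1 - t) ^ (b - 1) := by
  rw [intervalIntegral.integral_congr fun u hu =>
      scaled_beta_integrand_eq hα (by rw [uIcc_of_le hx] at hu; exact hu.1),
    intervalIntegral.integral_const_mul, ← mul_assoc, ← Real.rpow_add hα,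
    show a + (1 - a) = 1 by ring, Real.rpow_one, ← smul_eq_mul,
    intervalIntegral.smul_integral_comp_mul_left (fun t : ℝ => t ^ (a - 1) * (1 - t) ^ (b - 1)),
    mul_zero]

end BetaIntegrand

/-- For κ ∈ (4,8), α ∈ (0,1], x ∈ (0,1]:
α^{1−4/κ}·∫₀^x (1−αu)^{8/κ−2}·u^{−4/κ} du ≤ B(1−4/κ, 8/κ−1); in particular the
integral is finite. -/
theorem stmt_4 (κ : ℝ) (h1 : 4 < κ) (h2 : κ < 8) (α x : ℝ)
    (hα : α ∈ Set.Ioc (0:ℝ) 1) (hx : x ∈ Set.Ioc (0:ℝ) 1) :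
    IntegrableOn (fun u : ℝ => (1 - α * u) ^ (8/κ - 2) * u ^ (-(4/κ))) (Set.Ioc 0 x) ∧
    α ^ (1 - 4/κ) * ∫ u in Set.Ioc (0:ℝ) x, (1 - α * u) ^ (8/κ - 2) * u ^ (-(4/κ))
      ≤ Real.Gamma (1 - 4/κ) * Real.Gamma (8/κ - 1)
          / Real.Gamma ((1 - 4/κ) + (8/κ - 1)) := by
  obtain ⟨hα₀, hα₁⟩ := hα
  obtain ⟨hx₀, hx₁⟩ := hx
  have hκ : 0 < κ := by linarith
  have ha : 0 < 1 - 4 / κ := by rw [sub_pos, div_lt_one hκ]; exact h1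
  have hb : 0 < 8 / κ - 1 := by rw [sub_pos, one_lt_div hκ]; exact h2
  have hαx : α * x ≤ 1 := mul_le_one₀ hα₁ hx₀.le hx₁
  have hint := intervalIntegrable_scaled_beta_integrand ha hb hα₀ hx₀.le hαx
  have hle := (rpow_mul_integral_scaled_beta_integrand hα₀ hx₀.le).trans_le
    (integral_beta_integrand_le_beta ha hb (by positivity) hαx)
  rw [intervalIntegrable_iff_integrableOn_Ioc_of_le hx₀.le] at hint
  rw [intervalIntegral.integral_of_le hx₀.le] at hle
  simp only [show 8 / κ - 1 - 1 = 8 / κ - 2 by ring, show 1 - 4 / κ - 1 = -(4 / κ) by ring]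
    at hint hle
  exact ⟨hint, hle⟩
end

section
/- Fix a real κ with 4 < κ < 8 and b ∈ (0,1). For 0 < s < 1 define Z(s,b) = ∫₁^∞ ∫_{v₂}^∞ f(0,s,1;v₁,v₂) · (b·s)^{1−4/κ}·((1−b)·s)^{1−4/κ}·(1−b·s)^{1−4/κ}·(v₁−b·s)^{8/κ−2}·(v₂−b·s)^{8/κ−2} dv₁ dv₂. Then lim_{s→0⁺} s^{6/κ−2}·Z(s,b) = b^{1−4/κ}·(1−b)^{1−4/κ} · ∫₁^∞ ∫_{v₂}^∞ (v₁−1)^{−4/κ}·(v₂−1)^{−4/κ}·(v₁−v₂)^{8/κ}·v₁^{−2}·v₂^{−2} dv₁ dv₂, and the double integral on the right-hand side is finite and positive. -/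
open MeasureTheory

open Set Filter Real
open scoped ENNReal

section Stmt8Aux


noncomputable def DD (κ v₂ v₁ : ℝ) : ℝ :=
  (v₁ - 1) ^ (-(4/κ)) * (v₂ - 1) ^ (-(4/κ)) * (v₁ - v₂) ^ (8/κ)
    * v₁ ^ (-2 : ℝ) * v₂ ^ (-2 : ℝ)

noncomputable def HH (κ b s v₂ v₁ : ℝ) : ℝ :=
  v₁ ^ (-(4/κ)) * (v₁ - s) ^ (-(4/κ)) * (v₁ - 1) ^ (-(4/κ))
    * (v₂ ^ (-(4/κ)) * (v₂ - s) ^ (-(4/κ)) * (v₂ - 1) ^ (-(4/κ)))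
    * (v₁ - v₂) ^ (8/κ) * (v₁ - b*s) ^ (8/κ - 2) * (v₂ - b*s) ^ (8/κ - 2)

theorem measurable_DD (κ : ℝ) : Measurable (fun p : ℝ × ℝ => DD κ p.1 p.2) := by
  unfold DD; fun_prop

theorem measurable_HH (κ b s : ℝ) : Measurable (fun p : ℝ × ℝ => HH κ b s p.1 p.2) := by
  unfold HH; fun_prop

theorem DD_pos (κ : ℝ) {v₂ v₁ : ℝ} (h1 : 1 < v₂) (h2 : v₂ < v₁) : 0 < DD κ v₂ v₁ := by
  unfold DD
  have a1 : (0:ℝ) < v₁ - 1 := by linarith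
  have a2 : (0:ℝ) < v₂ - 1 := by linarith
  have a3 : (0:ℝ) < v₁ - v₂ := by linarith
  have a4 : (0:ℝ) < v₁ := by linarith
  have a5 : (0:ℝ) < v₂ := by linarith
  positivity

theorem DD_le (κ : ℝ) (h1 : 4 < κ) (v₂ v₁ : ℝ) (hv₂ : 1 < v₂) (hv₁ : v₂ < v₁) :
    DD κ v₂ v₁ ≤ ((v₂ - 1) ^ (-(4/κ)) * v₂ ^ (-2:ℝ)) * v₁ ^ (4/κ - 2) := by
  have hκ : (0:ℝ) < κ := by linarith
  have a1 : (0:ℝ) < v₁ - 1 := by linarith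
  have a2 : (0:ℝ) < v₂ - 1 := by linarith
  have a3 : (0:ℝ) < v₁ - v₂ := by linarith
  have a4 : (0:ℝ) < v₁ := by linarith
  have ha : (0:ℝ) < 4/κ := by positivity
  calc DD κ v₂ v₁
      = ((v₂-1)^(-(4/κ)) * v₂^(-2:ℝ)) *
        (((v₁-1)^(-(4/κ)) * (v₁-v₂)^(4/κ)) * ((v₁-v₂)^(4/κ) * v₁^(-2:ℝ))) := by
        unfold DD
        rw [show (8:ℝ)/κ = 4/κ + 4/κ by ring, rpow_add a3]
        ring
    _ ≤ ((v₂-1)^(-(4/κ)) * v₂^(-2:ℝ)) *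
        (((v₁-1)^(-(4/κ)) * (v₁-1)^(4/κ)) * (v₁^(4/κ) * v₁^(-2:ℝ))) := by
        refine mul_le_mul_of_nonneg_left ?_ (by positivity)
        refine mul_le_mul ?_ ?_ (by positivity) (by positivity)
        · exact mul_le_mul_of_nonneg_left
            (rpow_le_rpow a3.le (by linarith) ha.le) (by positivity)
        · exact mul_le_mul_of_nonneg_right
            (rpow_le_rpow a3.le (by linarith) ha.le) (by positivity)
    _ = ((v₂-1)^(-(4/κ)) * v₂^(-2:ℝ)) * v₁ ^ (4/κ - 2) := by
        rw [← rpow_add a1, ← rpow_add a4, show -(4/κ) + 4/κ = (0:ℝ) by ring, rpow_zero,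
          show 4/κ + (-2:ℝ) = 4/κ - 2 by ring, one_mul]

theorem HH_nonneg (κ b s : ℝ) (hb0 : 0 < b) (hb1 : b < 1) (hs0 : 0 ≤ s) (hs : s ≤ 1/2)
    {v₂ v₁ : ℝ} (hv₂ : 1 < v₂) (hv₁ : v₂ < v₁) : 0 ≤ HH κ b s v₂ v₁ := by
  unfold HH
  have a1 : (0:ℝ) < v₁ - 1 := by linarith
  have a2 : (0:ℝ) < v₂ - 1 := by linarith
  have a3 : (0:ℝ) < v₁ - v₂ := by linarith
  have a4 : (0:ℝ) < v₁ := by linarith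
  have a5 : (0:ℝ) < v₂ := by linarith
  have a6 : (0:ℝ) < v₁ - s := by linarith
  have a7 : (0:ℝ) < v₂ - s := by linarith
  have a8 : (0:ℝ) < v₁ - b*s := by nlinarith
  have a9 : (0:ℝ) < v₂ - b*s := by nlinarith
  positivity

theorem HH_le (κ b s : ℝ) (h1 : 4 < κ) (h2 : κ < 8) (hb0 : 0 < b) (hb1 : b < 1)
    (hs0 : 0 ≤ s) (hs : s ≤ 1/2) (v₂ v₁ : ℝ) (hv₂ : 1 < v₂) (hv₁ : v₂ < v₁) :
    HH κ b s v₂ v₁ ≤ 2 ^ ((4:ℝ) - 8/κ) * DD κ v₂ v₁ := by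
  have hκ : (0:ℝ) < κ := by linarith
  have a2 : (0:ℝ) < v₂ - 1 := by linarith
  have a3 : (0:ℝ) < v₁ - v₂ := by linarith
  have a4 : (0:ℝ) < v₁ := by linarith
  have a5 : (0:ℝ) < v₂ := by linarith
  have a1 : (0:ℝ) < v₁ - 1 := by linarith
  have ha : (0:ℝ) < 4/κ := by positivity
  have hbs0 : 0 ≤ b * s := by positivity
  have hbs : b * s ≤ 1/2 := by nlinarith
  have he : 8/κ - 2 ≤ (0:ℝ) := by
    rw [sub_nonpos, div_le_iff₀ hκ]; linarith
  have key1 : ∀ v : ℝ, 1 < v → (v - s) ^ (-(4/κ)) ≤ 2 ^ (4/κ) * v ^ (-(4/κ)) := by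
    intro v hv
    have hv2 : (0:ℝ) < v/2 := by linarith
    have hle : v/2 ≤ v - s := by linarith
    calc (v - s) ^ (-(4/κ)) ≤ (v/2) ^ (-(4/κ)) := rpow_le_rpow_of_nonpos hv2 hle (by linarith)
      _ = 2 ^ (4/κ) * v ^ (-(4/κ)) := by
          rw [div_rpow (by linarith : (0:ℝ) ≤ v) (by norm_num : (0:ℝ) ≤ 2),
            rpow_neg (by linarith : (0:ℝ) ≤ v), rpow_neg (by norm_num : (0:ℝ) ≤ 2)]
          field_simp
  have key2 : ∀ v : ℝ, 1 < v → (v - b*s) ^ (8/κ - 2) ≤ 2 ^ ((2:ℝ) - 8/κ) * v ^ (8/κ - 2) := by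
    intro v hv
    have hv2 : (0:ℝ) < v/2 := by linarith
    have hle : v/2 ≤ v - b*s := by linarith
    calc (v - b*s) ^ (8/κ - 2) ≤ (v/2) ^ (8/κ - 2) := rpow_le_rpow_of_nonpos hv2 hle he
      _ = 2 ^ ((2:ℝ) - 8/κ) * v ^ (8/κ - 2) := by
          rw [div_rpow (by linarith : (0:ℝ) ≤ v) (by norm_num : (0:ℝ) ≤ 2),
            show (2:ℝ) - 8/κ = -(8/κ - 2) by ring,
            rpow_neg (by norm_num : (0:ℝ) ≤ 2)]
          field_simp
  have hcomb : ∀ v : ℝ, 0 < v → v ^ (-(4/κ)) * (v ^ (-(4/κ)) * v ^ (8/κ - 2)) = v ^ (-2:ℝ) := by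
    intro v hv
    rw [← rpow_add hv, ← rpow_add hv]
    congr 1; ring
  have a6 : (0:ℝ) < v₁ - s := by linarith
  have a7 : (0:ℝ) < v₂ - s := by linarith
  have a8 : (0:ℝ) < v₁ - b*s := by linarith
  have a9 : (0:ℝ) < v₂ - b*s := by linarith
  calc HH κ b s v₂ v₁
      = ((v₁-1)^(-(4/κ)) * (v₂-1)^(-(4/κ)) * (v₁-v₂)^(8/κ) * v₁^(-(4/κ)) * v₂^(-(4/κ)))
        * ((v₁ - s)^(-(4/κ)) * ((v₁ - b*s)^(8/κ-2) * ((v₂ - s)^(-(4/κ)) * (v₂ - b*s)^(8/κ-2)))) := by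
        unfold HH; ring
    _ ≤ ((v₁-1)^(-(4/κ)) * (v₂-1)^(-(4/κ)) * (v₁-v₂)^(8/κ) * v₁^(-(4/κ)) * v₂^(-(4/κ)))
        * ((2^(4/κ) * v₁^(-(4/κ))) * ((2^((2:ℝ)-8/κ) * v₁^(8/κ-2)) *
           ((2^(4/κ) * v₂^(-(4/κ))) * (2^((2:ℝ)-8/κ) * v₂^(8/κ-2))))) := by
        refine mul_le_mul_of_nonneg_left ?_ (by positivity)
        refine mul_le_mul (key1 v₁ (by linarith)) ?_ (by positivity) (by positivity)
        refine mul_le_mul (key2 v₁ (by linarith)) ?_ (by positivity) (by positivity)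
        exact mul_le_mul (key1 v₂ hv₂) (key2 v₂ hv₂) (by positivity) (by positivity)
    _ = (2^(4/κ) * 2^(4/κ) * 2^((2:ℝ)-8/κ) * 2^((2:ℝ)-8/κ))
        * ((v₁-1)^(-(4/κ)) * (v₂-1)^(-(4/κ)) * (v₁-v₂)^(8/κ)
          * (v₁^(-(4/κ)) * (v₁^(-(4/κ)) * v₁^(8/κ-2)))
          * (v₂^(-(4/κ)) * (v₂^(-(4/κ)) * v₂^(8/κ-2)))) := by ring
    _ = 2 ^ ((4:ℝ) - 8/κ) * DD κ v₂ v₁ := by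
        rw [hcomb v₁ a4, hcomb v₂ a5,
          ← rpow_add (by norm_num : (0:ℝ) < 2), ← rpow_add (by norm_num : (0:ℝ) < 2),
          ← rpow_add (by norm_num : (0:ℝ) < 2),
          show 4/κ + 4/κ + ((2:ℝ)-8/κ) + ((2:ℝ)-8/κ) = (4:ℝ) - 8/κ by ring]
        unfold DD; ring

-- integrability of the outer majorant (v₂-1)^(-(4/κ)) * v₂^(4/κ-3) on Ioi 1
theorem outer_majorant_int (κ : ℝ) (h1 : 4 < κ) (h2 : κ < 8) :
    IntegrableOn (fun x : ℝ => (x - 1) ^ (-(4/κ)) * x ^ (4/κ - 3)) (Ioi 1) := by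
  have hκ : (0:ℝ) < κ := by linarith
  have ha0 : (0:ℝ) < 4/κ := by positivity
  have ha1 : 4/κ < 1 := by rw [div_lt_one hκ]; linarith
  have hmeas : Measurable (fun x : ℝ => (x - 1) ^ (-(4/κ)) * x ^ (4/κ - 3)) := by fun_prop
  rw [← Ioc_union_Ioi_eq_Ioi (by norm_num : (1:ℝ) ≤ 2)]
  refine IntegrableOn.union ?_ ?_
  · -- on Ioc 1 2, dominated by (x-1)^(-(4/κ))
    have base : IntegrableOn (fun x : ℝ => (x - 1) ^ (-(4/κ))) (Ioc 1 2) := by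
      have h0 : IntervalIntegrable (fun x : ℝ => x ^ (-(4/κ))) volume 0 1 :=
        intervalIntegral.intervalIntegrable_rpow' (by linarith)
      have h1' := h0.comp_sub_right 1
      simpa using (intervalIntegrable_iff_integrableOn_Ioc_of_le (by norm_num : (1:ℝ) ≤ 2)).1
        (by norm_num at h1' ⊢; exact h1')
    refine Integrable.mono' base hmeas.aestronglyMeasurable ?_
    refine (ae_restrict_iff' measurableSet_Ioc).2 (Eventually.of_forall ?_)
    intro x hx
    have hx1 : (0:ℝ) < x - 1 := by linarith [hx.1]
    have hx0 : (1:ℝ) ≤ x := hx.1.le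
    rw [Real.norm_eq_abs, abs_of_nonneg (by positivity)]
    calc (x - 1) ^ (-(4/κ)) * x ^ (4/κ - 3)
        ≤ (x - 1) ^ (-(4/κ)) * 1 :=
          mul_le_mul_of_nonneg_left
            (rpow_le_one_of_one_le_of_nonpos hx0 (by rw [sub_nonpos, div_le_iff₀ hκ]; linarith))
            (by positivity)
      _ = (x - 1) ^ (-(4/κ)) := mul_one _
  · -- on Ioi 2, dominated by 2^(4/κ) * x^(-3)
    have base : IntegrableOn (fun x : ℝ => 2 ^ (4/κ) * x ^ (-3:ℝ)) (Ioi 2) :=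
      (integrableOn_Ioi_rpow_of_lt (by norm_num) (by norm_num)).const_mul _
    refine Integrable.mono' base hmeas.aestronglyMeasurable ?_
    refine (ae_restrict_iff' measurableSet_Ioi).2 (Eventually.of_forall ?_)
    intro x hx
    have hx2 : (2:ℝ) < x := hx
    have hx0 : (0:ℝ) < x := by linarith
    have hx1 : (0:ℝ) < x - 1 := by linarith
    rw [Real.norm_eq_abs, abs_of_nonneg (by positivity)]
    calc (x - 1) ^ (-(4/κ)) * x ^ (4/κ - 3)
        ≤ (x/2) ^ (-(4/κ)) * x ^ (4/κ - 3) :=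
          mul_le_mul_of_nonneg_right
            (rpow_le_rpow_of_nonpos (by linarith) (by linarith) (by linarith))
            (by positivity)
      _ = 2 ^ (4/κ) * x ^ (-3:ℝ) := by
          rw [div_rpow hx0.le (by norm_num : (0:ℝ) ≤ 2),
            rpow_neg hx0.le, rpow_neg (by norm_num : (0:ℝ) ≤ 2)]
          have hxcomb : x ^ (4/κ - 3) = x ^ (4/κ) * x ^ (-3:ℝ) := by
            rw [← rpow_add hx0, show 4/κ + (-3:ℝ) = 4/κ - 3 by ring]
          have h2a : (0:ℝ) < (2:ℝ) ^ (4/κ) := rpow_pos_of_pos (by norm_num) _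
          have hxa : (0:ℝ) < x ^ (4/κ) := rpow_pos_of_pos hx0 _
          rw [hxcomb]
          field_simp

theorem measurable_DD_slice (κ v₂ : ℝ) : Measurable (fun v₁ => DD κ v₂ v₁) := by
  unfold DD; fun_prop

theorem inner_lint_le (κ : ℝ) (h1 : 4 < κ) {v₂ : ℝ} (hv₂ : 1 < v₂) :
    (∫⁻ v₁ in Ioi v₂, ENNReal.ofReal (DD κ v₂ v₁))
      ≤ ENNReal.ofReal (((v₂ - 1) ^ (-(4/κ)) * v₂ ^ (-2:ℝ)) * (v₂ ^ (4/κ - 1) / (1 - 4/κ))) := by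
  have hκ : (0:ℝ) < κ := by linarith
  have hv₂0 : (0:ℝ) < v₂ := by linarith
  have hlt : 4/κ - 2 < -1 := by
    have : 4/κ < 1 := by rw [div_lt_one hκ]; linarith
    linarith
  have hInt : IntegrableOn
      (fun v₁ : ℝ => ((v₂ - 1) ^ (-(4/κ)) * v₂ ^ (-2:ℝ)) * v₁ ^ (4/κ - 2)) (Ioi v₂) :=
    (integrableOn_Ioi_rpow_of_lt hlt hv₂0).const_mul _
  have hnn : 0 ≤ᵐ[volume.restrict (Ioi v₂)]
      fun v₁ : ℝ => ((v₂ - 1) ^ (-(4/κ)) * v₂ ^ (-2:ℝ)) * v₁ ^ (4/κ - 2) := by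
    refine (ae_restrict_iff' measurableSet_Ioi).2 (Eventually.of_forall ?_)
    intro v₁ hv₁
    have h2 : (0:ℝ) < v₂ - 1 := by linarith
    have h3 : (0:ℝ) < v₁ := by have := mem_Ioi.1 hv₁; linarith
    positivity
  calc (∫⁻ v₁ in Ioi v₂, ENNReal.ofReal (DD κ v₂ v₁))
      ≤ ∫⁻ v₁ in Ioi v₂, ENNReal.ofReal
          (((v₂ - 1) ^ (-(4/κ)) * v₂ ^ (-2:ℝ)) * v₁ ^ (4/κ - 2)) :=
        setLIntegral_mono' measurableSet_Ioi fun v₁ hv₁ =>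
          ENNReal.ofReal_le_ofReal (DD_le κ h1 v₂ v₁ hv₂ (mem_Ioi.1 hv₁))
    _ = ENNReal.ofReal (∫ v₁ in Ioi v₂,
          ((v₂ - 1) ^ (-(4/κ)) * v₂ ^ (-2:ℝ)) * v₁ ^ (4/κ - 2)) :=
        (ofReal_integral_eq_lintegral_ofReal hInt hnn).symm
    _ = ENNReal.ofReal (((v₂ - 1) ^ (-(4/κ)) * v₂ ^ (-2:ℝ)) * (v₂ ^ (4/κ - 1) / (1 - 4/κ))) := by
        rw [integral_const_mul, integral_Ioi_rpow_of_lt hlt hv₂0,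
          show 4/κ - 2 + 1 = 4/κ - 1 by ring,
          show (1:ℝ) - 4/κ = -(4/κ - 1) by ring, div_neg]
        congr 1
        ring

theorem lint_DD_lt_top (κ : ℝ) (h1 : 4 < κ) (h2 : κ < 8) :
    (∫⁻ v₂ in Ioi (1:ℝ), ∫⁻ v₁ in Ioi v₂, ENNReal.ofReal (DD κ v₂ v₁)) < ⊤ := by
  have hκ : (0:ℝ) < κ := by linarith
  calc (∫⁻ v₂ in Ioi (1:ℝ), ∫⁻ v₁ in Ioi v₂, ENNReal.ofReal (DD κ v₂ v₁))
      ≤ ∫⁻ v₂ in Ioi (1:ℝ), ENNReal.ofReal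
          ((1/(1 - 4/κ)) * ((v₂ - 1) ^ (-(4/κ)) * v₂ ^ (4/κ - 3))) := by
        refine setLIntegral_mono' measurableSet_Ioi fun v₂ hv₂ => ?_
        have hv₂ : 1 < v₂ := mem_Ioi.1 hv₂
        refine (inner_lint_le κ h1 hv₂).trans (ENNReal.ofReal_le_ofReal (le_of_eq ?_))
        have hv₂0 : (0:ℝ) < v₂ := by linarith
        have : v₂ ^ (-2:ℝ) * v₂ ^ (4/κ - 1) = v₂ ^ (4/κ - 3) := by
          rw [← rpow_add hv₂0, show (-2:ℝ) + (4/κ - 1) = 4/κ - 3 by ring]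
        calc ((v₂ - 1) ^ (-(4/κ)) * v₂ ^ (-2:ℝ)) * (v₂ ^ (4/κ - 1) / (1 - 4/κ))
            = (1/(1 - 4/κ)) * ((v₂ - 1) ^ (-(4/κ)) * (v₂ ^ (-2:ℝ) * v₂ ^ (4/κ - 1))) := by ring
          _ = (1/(1 - 4/κ)) * ((v₂ - 1) ^ (-(4/κ)) * v₂ ^ (4/κ - 3)) := by rw [this]
    _ < ⊤ := ((outer_majorant_int κ h1 h2).const_mul _).lintegral_lt_top

theorem measurable_inner_lint (κ : ℝ) :
    Measurable (fun v₂ => ∫⁻ v₁ in Ioi v₂, ENNReal.ofReal (DD κ v₂ v₁)) := by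
  have : ∀ v₂ : ℝ, (∫⁻ v₁ in Ioi v₂, ENNReal.ofReal (DD κ v₂ v₁))
      = ∫⁻ v₁, (fun p : ℝ × ℝ => if p.1 < p.2 then ENNReal.ofReal (DD κ p.1 p.2) else 0) (v₂, v₁) := by
    intro v₂
    rw [← lintegral_indicator measurableSet_Ioi]
    simp [indicator_apply, mem_Ioi]
  simp_rw [this]
  exact Measurable.lintegral_prod_right'
    (Measurable.ite (measurableSet_lt measurable_fst measurable_snd)
      ((measurable_DD κ).ennreal_ofReal) measurable_const)

theorem ae_inner_fin (κ : ℝ) (h1 : 4 < κ) (h2 : κ < 8) :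
    ∀ᵐ v₂ ∂(volume.restrict (Ioi (1:ℝ))),
      (∫⁻ v₁ in Ioi v₂, ENNReal.ofReal (DD κ v₂ v₁)) < ⊤ :=
  ae_lt_top (measurable_inner_lint κ) (lint_DD_lt_top κ h1 h2).ne

theorem integrableOn_DD_inner (κ : ℝ) {v₂ : ℝ} (hv₂ : 1 < v₂)
    (hfin : (∫⁻ v₁ in Ioi v₂, ENNReal.ofReal (DD κ v₂ v₁)) < ⊤) :
    IntegrableOn (fun v₁ => DD κ v₂ v₁) (Ioi v₂) := by
  have hnn : 0 ≤ᵐ[volume.restrict (Ioi v₂)] fun v₁ => DD κ v₂ v₁ :=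
    (ae_restrict_iff' measurableSet_Ioi).2
      (Eventually.of_forall fun v₁ hv₁ => (DD_pos κ hv₂ (mem_Ioi.1 hv₁)).le)
  exact ⟨(measurable_DD_slice κ v₂).aestronglyMeasurable,
    (hasFiniteIntegral_iff_ofReal hnn).2 hfin⟩

theorem integrable_F (κ : ℝ) (h1 : 4 < κ) (h2 : κ < 8) :
    IntegrableOn (fun v₂ => ∫ v₁ in Ioi v₂, DD κ v₂ v₁) (Ioi (1:ℝ)) := by
  have hmeasDind : Measurable (fun p : ℝ × ℝ => if p.1 < p.2 then DD κ p.1 p.2 else 0) :=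
    Measurable.ite (measurableSet_lt measurable_fst measurable_snd) (measurable_DD κ)
      measurable_const
  have inner_eq : ∀ v₂ : ℝ, (∫ v₁ in Ioi v₂, DD κ v₂ v₁)
      = ∫ v₁, (fun p : ℝ × ℝ => if p.1 < p.2 then DD κ p.1 p.2 else 0) (v₂, v₁) := by
    intro v₂
    rw [← integral_indicator measurableSet_Ioi]
    simp [indicator_apply, mem_Ioi]
  constructor
  · have hsm : StronglyMeasurable (fun v₂ : ℝ =>
        ∫ v₁ : ℝ, (fun p : ℝ × ℝ => if p.1 < p.2 then DD κ p.1 p.2 else 0) (v₂, v₁)) :=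
      hmeasDind.stronglyMeasurable.integral_prod_right'
    refine AEStronglyMeasurable.congr hsm.aestronglyMeasurable ?_
    exact Eventually.of_forall fun v₂ => (inner_eq v₂).symm
  · have hnnF : 0 ≤ᵐ[volume.restrict (Ioi (1:ℝ))] fun v₂ => ∫ v₁ in Ioi v₂, DD κ v₂ v₁ :=
      (ae_restrict_iff' measurableSet_Ioi).2 (Eventually.of_forall fun v₂ hv₂ =>
        setIntegral_nonneg measurableSet_Ioi fun v₁ hv₁ =>
          (DD_pos κ (mem_Ioi.1 hv₂) (mem_Ioi.1 hv₁)).le)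
    rw [hasFiniteIntegral_iff_ofReal hnnF]
    calc (∫⁻ v₂ in Ioi (1:ℝ), ENNReal.ofReal (∫ v₁ in Ioi v₂, DD κ v₂ v₁))
        ≤ ∫⁻ v₂ in Ioi (1:ℝ), ∫⁻ v₁ in Ioi v₂, ENNReal.ofReal (DD κ v₂ v₁) := by
          refine setLIntegral_mono' measurableSet_Ioi fun v₂ hv₂ => ?_
          by_cases hInt : IntegrableOn (fun v₁ => DD κ v₂ v₁) (Ioi v₂)
          · rw [ofReal_integral_eq_lintegral_ofReal hInt
              ((ae_restrict_iff' measurableSet_Ioi).2 (Eventually.of_forall fun v₁ hv₁ =>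
                (DD_pos κ (mem_Ioi.1 hv₂) (mem_Ioi.1 hv₁)).le))]
          · rw [integral_undef hInt]
            simp
      _ < ⊤ := lint_DD_lt_top κ h1 h2

theorem measurable_HH_slice (κ b s v₂ : ℝ) : Measurable (fun v₁ => HH κ b s v₂ v₁) := by
  unfold HH; fun_prop

theorem HH_zero_eq (κ b : ℝ) {v₂ v₁ : ℝ} (hv₂ : 1 < v₂) (hv₁ : v₂ < v₁) :
    HH κ b 0 v₂ v₁ = DD κ v₂ v₁ := by
  have a4 : (0:ℝ) < v₁ := by linarith
  have a5 : (0:ℝ) < v₂ := by linarith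
  have hcomb : ∀ v : ℝ, 0 < v → v ^ (-(4/κ)) * (v ^ (-(4/κ)) * v ^ (8/κ - 2)) = v ^ (-2:ℝ) := by
    intro v hv
    rw [← rpow_add hv, ← rpow_add hv, show -(4/κ) + (-(4/κ) + (8/κ - 2)) = (-2:ℝ) by ring]
  calc HH κ b 0 v₂ v₁
      = (v₁-1)^(-(4/κ)) * (v₂-1)^(-(4/κ)) * (v₁-v₂)^(8/κ)
        * (v₁^(-(4/κ)) * (v₁^(-(4/κ)) * v₁^(8/κ-2)))
        * (v₂^(-(4/κ)) * (v₂^(-(4/κ)) * v₂^(8/κ-2))) := by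
        unfold HH; rw [mul_zero, sub_zero, sub_zero]; ring
    _ = DD κ v₂ v₁ := by rw [hcomb v₁ a4, hcomb v₂ a5]; unfold DD; ring

theorem HH_tendsto (κ b : ℝ) {v₂ v₁ : ℝ} (hv₂ : 1 < v₂) (hv₁ : v₂ < v₁) :
    Tendsto (fun s => HH κ b s v₂ v₁) (nhdsWithin 0 (Ioi 0)) (nhds (DD κ v₂ v₁)) := by
  have c1 : ContinuousAt (fun s : ℝ => (v₁ - s) ^ (-(4/κ))) 0 :=
    ((continuous_const.sub continuous_id).continuousAt).rpow_const
      (Or.inl (by simp; linarith))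
  have c2 : ContinuousAt (fun s : ℝ => (v₂ - s) ^ (-(4/κ))) 0 :=
    ((continuous_const.sub continuous_id).continuousAt).rpow_const
      (Or.inl (by simp; linarith))
  have c3 : ContinuousAt (fun s : ℝ => (v₁ - b*s) ^ (8/κ - 2)) 0 :=
    ((continuous_const.sub (continuous_const.mul continuous_id)).continuousAt).rpow_const
      (Or.inl (by simp; linarith))
  have c4 : ContinuousAt (fun s : ℝ => (v₂ - b*s) ^ (8/κ - 2)) 0 :=
    ((continuous_const.sub (continuous_const.mul continuous_id)).continuousAt).rpow_const
      (Or.inl (by simp; linarith))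
  have hca : ContinuousAt (fun s => HH κ b s v₂ v₁) 0 := by
    unfold HH
    exact ((((((continuousAt_const.mul c1).mul continuousAt_const).mul
      ((continuousAt_const.mul c2).mul continuousAt_const)).mul
      continuousAt_const).mul c3).mul c4)
  have := hca.tendsto.mono_left (nhdsWithin_le_nhds (s := Ioi (0:ℝ)))
  rwa [HH_zero_eq κ b hv₂ hv₁] at this

theorem inner_tendsto (κ b : ℝ) (h1 : 4 < κ) (h2 : κ < 8) (hb0 : 0 < b) (hb1 : b < 1)
    {v₂ : ℝ} (hv₂ : 1 < v₂)
    (hDint : IntegrableOn (fun v₁ => DD κ v₂ v₁) (Ioi v₂)) :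
    Tendsto (fun s => ∫ v₁ in Ioi v₂, HH κ b s v₂ v₁) (nhdsWithin 0 (Ioi 0))
      (nhds (∫ v₁ in Ioi v₂, DD κ v₂ v₁)) := by
  refine tendsto_integral_filter_of_dominated_convergence
    (fun v₁ => 2 ^ ((4:ℝ) - 8/κ) * DD κ v₂ v₁) ?_ ?_ ?_ ?_
  · exact Eventually.of_forall fun s => (measurable_HH_slice κ b s v₂).aestronglyMeasurable
  · filter_upwards [Ioo_mem_nhdsGT_of_mem
      (show (0:ℝ) ∈ Ico (0:ℝ) (1/2) by constructor <;> norm_num)] with s hs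
    refine (ae_restrict_iff' measurableSet_Ioi).2 (Eventually.of_forall fun v₁ hv₁ => ?_)
    have hv₁ := mem_Ioi.1 hv₁
    rw [Real.norm_eq_abs, abs_of_nonneg (HH_nonneg κ b s hb0 hb1 hs.1.le hs.2.le hv₂ hv₁)]
    exact HH_le κ b s h1 h2 hb0 hb1 hs.1.le hs.2.le v₂ v₁ hv₂ hv₁
  · exact hDint.const_mul _
  · exact (ae_restrict_iff' measurableSet_Ioi).2
      (Eventually.of_forall fun v₁ hv₁ => HH_tendsto κ b hv₂ (mem_Ioi.1 hv₁))

theorem main_tendsto (κ b : ℝ) (h1 : 4 < κ) (h2 : κ < 8) (hb0 : 0 < b) (hb1 : b < 1) :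
    Tendsto (fun s => ∫ v₂ in Ioi (1:ℝ), ∫ v₁ in Ioi v₂, HH κ b s v₂ v₁)
      (nhdsWithin 0 (Ioi 0))
      (nhds (∫ v₂ in Ioi (1:ℝ), ∫ v₁ in Ioi v₂, DD κ v₂ v₁)) := by
  refine tendsto_integral_filter_of_dominated_convergence
    (fun v₂ => 2 ^ ((4:ℝ) - 8/κ) * ∫ v₁ in Ioi v₂, DD κ v₂ v₁) ?_ ?_ ?_ ?_
  · refine Eventually.of_forall fun s => ?_
    have hmeasHind : Measurable (fun p : ℝ × ℝ => if p.1 < p.2 then HH κ b s p.1 p.2 else 0) :=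
      Measurable.ite (measurableSet_lt measurable_fst measurable_snd) (measurable_HH κ b s)
        measurable_const
    have hsm : StronglyMeasurable (fun v₂ : ℝ =>
        ∫ v₁ : ℝ, (fun p : ℝ × ℝ => if p.1 < p.2 then HH κ b s p.1 p.2 else 0) (v₂, v₁)) :=
      hmeasHind.stronglyMeasurable.integral_prod_right'
    refine hsm.aestronglyMeasurable.congr (Eventually.of_forall fun v₂ => ?_)
    show (∫ v₁ : ℝ, (fun p : ℝ × ℝ => if p.1 < p.2 then HH κ b s p.1 p.2 else 0) (v₂, v₁))
      = ∫ v₁ in Ioi v₂, HH κ b s v₂ v₁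
    rw [← integral_indicator measurableSet_Ioi]
    simp [indicator_apply, mem_Ioi]
  · filter_upwards [Ioo_mem_nhdsGT_of_mem
      (show (0:ℝ) ∈ Ico (0:ℝ) (1/2) by constructor <;> norm_num)] with s hs
    filter_upwards [ae_inner_fin κ h1 h2, ae_restrict_mem measurableSet_Ioi] with v₂ hfin hv₂
    have hv₂' := mem_Ioi.1 hv₂
    have hDint := integrableOn_DD_inner κ hv₂' hfin
    calc ‖∫ v₁ in Ioi v₂, HH κ b s v₂ v₁‖
        ≤ ∫ v₁ in Ioi v₂, ‖HH κ b s v₂ v₁‖ := norm_integral_le_integral_norm _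
      _ ≤ ∫ v₁ in Ioi v₂, 2 ^ ((4:ℝ) - 8/κ) * DD κ v₂ v₁ := by
          refine integral_mono_of_nonneg (Eventually.of_forall fun v₁ => norm_nonneg _)
            (hDint.const_mul _) ?_
          refine (ae_restrict_iff' measurableSet_Ioi).2 (Eventually.of_forall fun v₁ hv₁ => ?_)
          have hv₁ := mem_Ioi.1 hv₁
          show ‖HH κ b s v₂ v₁‖ ≤ 2 ^ ((4:ℝ) - 8/κ) * DD κ v₂ v₁
          rw [Real.norm_eq_abs, abs_of_nonneg (HH_nonneg κ b s hb0 hb1 hs.1.le hs.2.le hv₂' hv₁)]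
          exact HH_le κ b s h1 h2 hb0 hb1 hs.1.le hs.2.le v₂ v₁ hv₂' hv₁
      _ = 2 ^ ((4:ℝ) - 8/κ) * ∫ v₁ in Ioi v₂, DD κ v₂ v₁ := integral_const_mul _ _
  · exact (integrable_F κ h1 h2).const_mul _
  · filter_upwards [ae_inner_fin κ h1 h2, ae_restrict_mem measurableSet_Ioi] with v₂ hfin hv₂
    exact inner_tendsto κ b h1 h2 hb0 hb1 (mem_Ioi.1 hv₂)
      (integrableOn_DD_inner κ (mem_Ioi.1 hv₂) hfin)

theorem integral_DD_pos (κ : ℝ) (h1 : 4 < κ) (h2 : κ < 8) :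
    0 < ∫ v₂ in Ioi (1:ℝ), ∫ v₁ in Ioi v₂, DD κ v₂ v₁ := by
  set f := fun v₂ => ∫ v₁ in Ioi v₂, DD κ v₂ v₁ with hf
  have hfmeas : Measurable f := by
    have hmeasDind : Measurable (fun p : ℝ × ℝ => if p.1 < p.2 then DD κ p.1 p.2 else 0) :=
      Measurable.ite (measurableSet_lt measurable_fst measurable_snd) (measurable_DD κ)
        measurable_const
    have hsm : StronglyMeasurable (fun v₂ : ℝ =>
        ∫ v₁ : ℝ, (fun p : ℝ × ℝ => if p.1 < p.2 then DD κ p.1 p.2 else 0) (v₂, v₁)) :=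
      hmeasDind.stronglyMeasurable.integral_prod_right'
    have : f = fun v₂ : ℝ =>
        ∫ v₁ : ℝ, (fun p : ℝ × ℝ => if p.1 < p.2 then DD κ p.1 p.2 else 0) (v₂, v₁) := by
      funext v₂
      show (∫ v₁ in Ioi v₂, DD κ v₂ v₁)
        = ∫ v₁ : ℝ, (fun p : ℝ × ℝ => if p.1 < p.2 then DD κ p.1 p.2 else 0) (v₂, v₁)
      rw [← integral_indicator measurableSet_Ioi]
      simp [indicator_apply, mem_Ioi]
    rw [this]
    exact hsm.measurable
  have hnn : 0 ≤ᵐ[volume.restrict (Ioi (1:ℝ))] f :=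
    (ae_restrict_iff' measurableSet_Ioi).2 (Eventually.of_forall fun v₂ hv₂ =>
      setIntegral_nonneg measurableSet_Ioi fun v₁ hv₁ =>
        (DD_pos κ (mem_Ioi.1 hv₂) (mem_Ioi.1 hv₁)).le)
  refine (setIntegral_pos_iff_support_of_nonneg_ae hnn (integrable_F κ h1 h2)).2 ?_
  have hpos : ∀ᵐ v₂ ∂(volume.restrict (Ioi (1:ℝ))), 0 < f v₂ := by
    filter_upwards [ae_inner_fin κ h1 h2, ae_restrict_mem measurableSet_Ioi] with v₂ hfin hv₂
    have hv₂' := mem_Ioi.1 hv₂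
    have hDint := integrableOn_DD_inner κ hv₂' hfin
    have hnn2 : 0 ≤ᵐ[volume.restrict (Ioi v₂)] fun v₁ => DD κ v₂ v₁ :=
      (ae_restrict_iff' measurableSet_Ioi).2 (Eventually.of_forall fun v₁ hv₁ =>
        (DD_pos κ hv₂' (mem_Ioi.1 hv₁)).le)
    refine (setIntegral_pos_iff_support_of_nonneg_ae hnn2 hDint).2 ?_
    have hsub : Ioi v₂ ⊆ Function.support (fun v₁ => DD κ v₂ v₁) ∩ Ioi v₂ :=
      fun v₁ h => ⟨ne_of_gt (DD_pos κ hv₂' (mem_Ioi.1 h)), h⟩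
    calc (0:ℝ≥0∞) < ⊤ := by simp
      _ = volume (Ioi v₂) := (Real.volume_Ioi).symm
      _ ≤ _ := measure_mono hsub
  have hms : MeasurableSet {v : ℝ | 0 < f v} := measurableSet_lt measurable_const hfmeas
  have hcompl : volume.restrict (Ioi (1:ℝ)) {v : ℝ | 0 < f v}ᶜ = 0 := by
    have := ae_iff.1 hpos
    simpa [Set.compl_setOf] using this
  have htop : volume.restrict (Ioi (1:ℝ)) {v : ℝ | 0 < f v} = ⊤ := by
    have hsum := measure_add_measure_compl (μ := volume.restrict (Ioi (1:ℝ))) hms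
    rw [hcompl, add_zero, Measure.restrict_apply_univ, Real.volume_Ioi] at hsum
    exact hsum
  have hvol : volume ({v : ℝ | 0 < f v} ∩ Ioi 1) = ⊤ := by
    rwa [Measure.restrict_apply hms] at htop
  calc (0:ℝ≥0∞) < ⊤ := by simp
    _ = volume ({v : ℝ | 0 < f v} ∩ Ioi 1) := hvol.symm
    _ ≤ volume (Function.support f ∩ Ioi 1) :=
        measure_mono (inter_subset_inter_left _ (fun v hv => ne_of_gt hv))

end Stmt8Aux

/-- For κ ∈ (4,8), b ∈ (0,1):
lim_{s→0⁺} s^{6/κ−2}·Z(s,b) = b^{1−4/κ}(1−b)^{1−4/κ}·I(κ), where I(κ) is the double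
integral on the right-hand side, which is finite and positive. -/
theorem stmt_8 (κ b : ℝ) (h1 : 4 < κ) (h2 : κ < 8) (hb : b ∈ Set.Ioo (0:ℝ) 1) :
    Filter.Tendsto
      (fun s : ℝ => s ^ (6/κ - 2) *
        ∫ v₂ in Set.Ioi (1:ℝ), ∫ v₁ in Set.Ioi v₂,
          (s ^ (2/κ) * (1 - s) ^ (2/κ)
            * (v₁ ^ (-(4/κ)) * (v₁ - s) ^ (-(4/κ)) * (v₁ - 1) ^ (-(4/κ)))
            * (v₂ ^ (-(4/κ)) * (v₂ - s) ^ (-(4/κ)) * (v₂ - 1) ^ (-(4/κ)))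
            * (v₁ - v₂) ^ (8/κ))
          * ((b * s) ^ (1 - 4/κ) * ((1 - b) * s) ^ (1 - 4/κ) * (1 - b * s) ^ (1 - 4/κ)
            * (v₁ - b * s) ^ (8/κ - 2) * (v₂ - b * s) ^ (8/κ - 2)))
      (nhdsWithin 0 (Set.Ioi 0))
      (nhds (b ^ (1 - 4/κ) * (1 - b) ^ (1 - 4/κ) *
        ∫ v₂ in Set.Ioi (1:ℝ), ∫ v₁ in Set.Ioi v₂,
          (v₁ - 1) ^ (-(4/κ)) * (v₂ - 1) ^ (-(4/κ)) * (v₁ - v₂) ^ (8/κ)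
            * v₁ ^ (-2 : ℝ) * v₂ ^ (-2 : ℝ))) ∧
    0 < (∫ v₂ in Set.Ioi (1:ℝ), ∫ v₁ in Set.Ioi v₂,
          (v₁ - 1) ^ (-(4/κ)) * (v₂ - 1) ^ (-(4/κ)) * (v₁ - v₂) ^ (8/κ)
            * v₁ ^ (-2 : ℝ) * v₂ ^ (-2 : ℝ)) ∧
    (∫⁻ v₂ in Set.Ioi (1:ℝ), ∫⁻ v₁ in Set.Ioi v₂,
        ENNReal.ofReal ((v₁ - 1) ^ (-(4/κ)) * (v₂ - 1) ^ (-(4/κ)) * (v₁ - v₂) ^ (8/κ)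
          * v₁ ^ (-2 : ℝ) * v₂ ^ (-2 : ℝ))) < ⊤ := by
  obtain ⟨hb0, hb1⟩ := hb
  refine ⟨?_, ?_, ?_⟩
  · -- the limit statement
    -- continuity of the prefactor
    have c1 : ContinuousAt (fun s : ℝ => (1 - s) ^ (2/κ)) 0 :=
      ((continuous_const.sub continuous_id).continuousAt).rpow_const (Or.inl (by norm_num))
    have c2 : ContinuousAt (fun s : ℝ => (1 - b*s) ^ (1 - 4/κ)) 0 :=
      ((continuous_const.sub (continuous_const.mul continuous_id)).continuousAt).rpow_const
        (Or.inl (by simp))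
    have hPt : Tendsto (fun s : ℝ => b ^ (1 - 4/κ) * (1 - b) ^ (1 - 4/κ)
        * ((1 - s) ^ (2/κ) * (1 - b*s) ^ (1 - 4/κ))) (nhdsWithin 0 (Ioi 0))
        (nhds (b ^ (1 - 4/κ) * (1 - b) ^ (1 - 4/κ))) := by
      have hca : ContinuousAt (fun s : ℝ => b ^ (1 - 4/κ) * (1 - b) ^ (1 - 4/κ)
          * ((1 - s) ^ (2/κ) * (1 - b*s) ^ (1 - 4/κ))) 0 := continuousAt_const.mul (c1.mul c2)
      have := hca.tendsto.mono_left (nhdsWithin_le_nhds (s := Ioi (0:ℝ)))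
      have hval : b ^ (1 - 4/κ) * (1 - b) ^ (1 - 4/κ)
          * ((1 - (0:ℝ)) ^ (2/κ) * (1 - b*(0:ℝ)) ^ (1 - 4/κ))
          = b ^ (1 - 4/κ) * (1 - b) ^ (1 - 4/κ) := by
        norm_num
      rwa [hval] at this
    have hmul := hPt.mul (main_tendsto κ b h1 h2 hb0 hb1)
    refine Tendsto.congr' ?_ hmul
    filter_upwards [Ioo_mem_nhdsGT_of_mem
      (show (0:ℝ) ∈ Ico (0:ℝ) 1 by constructor <;> norm_num)] with s hs
    have hs0 : (0:ℝ) < s := hs.1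
    have hintegrand : ∀ v₂ v₁ : ℝ,
        (s ^ (2/κ) * (1 - s) ^ (2/κ)
            * (v₁ ^ (-(4/κ)) * (v₁ - s) ^ (-(4/κ)) * (v₁ - 1) ^ (-(4/κ)))
            * (v₂ ^ (-(4/κ)) * (v₂ - s) ^ (-(4/κ)) * (v₂ - 1) ^ (-(4/κ)))
            * (v₁ - v₂) ^ (8/κ))
          * ((b * s) ^ (1 - 4/κ) * ((1 - b) * s) ^ (1 - 4/κ) * (1 - b * s) ^ (1 - 4/κ)
            * (v₁ - b * s) ^ (8/κ - 2) * (v₂ - b * s) ^ (8/κ - 2))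
        = (s ^ (2/κ) * (1 - s) ^ (2/κ) * (b * s) ^ (1 - 4/κ) * ((1 - b) * s) ^ (1 - 4/κ)
            * (1 - b * s) ^ (1 - 4/κ)) * HH κ b s v₂ v₁ := by
      intro v₂ v₁; unfold HH; ring
    have hC : s ^ (6/κ - 2) * (s ^ (2/κ) * (1 - s) ^ (2/κ) * (b * s) ^ (1 - 4/κ)
          * ((1 - b) * s) ^ (1 - 4/κ) * (1 - b * s) ^ (1 - 4/κ))
        = b ^ (1 - 4/κ) * (1 - b) ^ (1 - 4/κ) * ((1 - s) ^ (2/κ) * (1 - b*s) ^ (1 - 4/κ)) := by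
      rw [Real.mul_rpow hb0.le hs0.le,
        Real.mul_rpow (by linarith : (0:ℝ) ≤ 1 - b) hs0.le]
      have hps : s ^ (6/κ - 2) * (s ^ (2/κ) * (s ^ (1 - 4/κ) * s ^ (1 - 4/κ))) = 1 := by
        rw [← rpow_add hs0, ← rpow_add hs0, ← rpow_add hs0,
          show 6/κ - 2 + (2/κ + (1 - 4/κ + (1 - 4/κ))) = (0:ℝ) by ring, rpow_zero]
      calc s ^ (6/κ - 2) * (s ^ (2/κ) * (1 - s) ^ (2/κ) * (b ^ (1 - 4/κ) * s ^ (1 - 4/κ))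
            * ((1 - b) ^ (1 - 4/κ) * s ^ (1 - 4/κ)) * (1 - b * s) ^ (1 - 4/κ))
          = (s ^ (6/κ - 2) * (s ^ (2/κ) * (s ^ (1 - 4/κ) * s ^ (1 - 4/κ))))
            * (b ^ (1 - 4/κ) * (1 - b) ^ (1 - 4/κ)
              * ((1 - s) ^ (2/κ) * (1 - b*s) ^ (1 - 4/κ))) := by ring
        _ = b ^ (1 - 4/κ) * (1 - b) ^ (1 - 4/κ)
              * ((1 - s) ^ (2/κ) * (1 - b*s) ^ (1 - 4/κ)) := by rw [hps, one_mul]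
    show b ^ (1 - 4/κ) * (1 - b) ^ (1 - 4/κ) * ((1 - s) ^ (2/κ) * (1 - b*s) ^ (1 - 4/κ))
        * (∫ v₂ in Ioi (1:ℝ), ∫ v₁ in Ioi v₂, HH κ b s v₂ v₁) = _
    simp only [hintegrand]
    simp_rw [integral_const_mul]
    rw [← hC]
    ring
  · have := integral_DD_pos κ h1 h2
    simpa only [DD] using this
  · have := lint_DD_lt_top κ h1 h2
    simpa only [DD] using this
end

section
/- Fix a real κ with 4 < κ < 8. There exists a constant C = C(κ) ∈ (0,∞), independent of b, such that for every b ∈ (0,1): lim_{s→0⁺} s^{8/κ−2} · Z(s,b) / (C_κ · ∫₁^∞ f(0,s,1;v) dv) = C · b^{1−4/κ}·(1−b)^{1−4/κ}, where C_κ = B(1−4/κ, 8/κ−1). Explicitly, C = I(κ)/(C_κ · B(1−4/κ, 12/κ−1)) with I(κ) = ∫₁^∞ ∫_{v₂}^∞ (v₁−1)^{−4/κ}(v₂−1)^{−4/κ}(v₁−v₂)^{8/κ}v₁^{−2}v₂^{−2} dv₁ dv₂. -/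
/-!
The factors `s^{2/κ}(1-s)^{2/κ}` cancel between numerator and denominator, and the powers of `s`
in `(bs)^{1-4/κ}((1-b)s)^{1-4/κ}` cancel `s^{8/κ-2}`, so the ratio is
`b^{1-4/κ}(1-b)^{1-4/κ}(1-bs)^{1-4/κ}` times a quotient of two integrals whose integrands are
continuous in `s`. For `s ≤ 1/2` each factor `(v - s)^e`, `(v - bs)^e` lies within a factor `2^|e|`
of its value at `s = 0`, so dominated convergence lets `s → 0` under the integrals. At `s = 0` the
one-curve integral is `∫₁^∞ v^{-8/κ}(v-1)^{-4/κ} dv = B(1-4/κ, 12/κ-1)` (substitute `v = 1/x`),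
and the two-curve integral is `I(κ)`, finite and positive since `4 < κ` makes the majorants
`v^{8/κ-2}(v-1)^{-4/κ}` and `v^{-2}(v-1)^{-4/κ}` integrable on `(1, ∞)`.
-/

open MeasureTheory Set Filter Topology ProbabilityTheory

theorem beta_comm (α β : ℝ) : beta α β = beta β α := by
  rw [beta, beta, mul_comm, add_comm]

theorem integral_Ioo_rpow_mul_one_sub_rpow {α β : ℝ} (hα : 0 < α) (hβ : 0 < β) :
    ∫ x in Ioo (0 : ℝ) 1, x ^ (α - 1) * (1 - x) ^ (β - 1) = beta α β := by
  have hpdf : ∫ x in Ioo (0 : ℝ) 1, 1 / beta α β * x ^ (α - 1) * (1 - x) ^ (β - 1) = 1 := by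
    rw [integral_eq_lintegral_of_nonneg_ae, ← lintegral_betaPDF, lintegral_betaPDF_eq_one hα hβ,
      ENNReal.toReal_one]
    · exact ae_restrict_of_forall_mem measurableSet_Ioo fun x hx =>
        (betaPDFReal_pos hx.1 hx.2 hα hβ).le.trans_eq (if_pos hx)
    · fun_prop
  simp_rw [mul_assoc, integral_const_mul] at hpdf
  field_simp [(beta_pos hα hβ).ne'] at hpdf
  exact hpdf

theorem integral_Ioi_one_rpow_neg_mul_sub_one_rpow {q c : ℝ} (hc : 0 < c) (hcq : c < q) :
    ∫ v in Ioi (1 : ℝ), v ^ (-q) * (v - 1) ^ (c - 1) = beta (q - c) c := by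
  have himage : (·⁻¹) '' Ioo (0 : ℝ) 1 = Ioi 1 := by
    rw [image_inv_eq_inv, inv_Ioo_0_left one_pos, inv_one]
  rw [← himage, integral_image_eq_integral_abs_deriv_smul measurableSet_Ioo
      (fun x hx => (hasDerivAt_inv hx.1.ne').hasDerivWithinAt) inv_injective.injOn,
    ← integral_Ioo_rpow_mul_one_sub_rpow (by linarith) hc]
  refine setIntegral_congr_fun measurableSet_Ioo fun x ⟨hx0, hx1⟩ => ?_
  have hjac : |-(x ^ 2)⁻¹| = x ^ (-2 : ℝ) := by
    rw [abs_neg, abs_of_pos (by positivity), Real.rpow_neg hx0.le]; norm_cast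
  have hpow : x⁻¹ ^ (-q) = x ^ q := by rw [Real.inv_rpow hx0.le, Real.rpow_neg hx0.le, inv_inv]
  have hsub : (x⁻¹ - 1) ^ (c - 1) = x ^ (1 - c) * (1 - x) ^ (c - 1) := by
    rw [show x⁻¹ - 1 = x⁻¹ * (1 - x) by field_simp, Real.mul_rpow (by positivity) (by linarith),
      Real.inv_rpow hx0.le, ← Real.rpow_neg hx0.le, neg_sub]
  rw [smul_eq_mul, hjac, hpow, hsub, ← mul_assoc, ← mul_assoc, ← Real.rpow_add hx0,
    ← Real.rpow_add hx0]
  ring_nf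

theorem rpow_le_two_rpow_abs_mul {x y : ℝ} (e : ℝ) (hy : 0 < y) (hxy : x / 2 ≤ y) (hyx : y ≤ x) :
    y ^ e ≤ 2 ^ |e| * x ^ e := by
  have hx : 0 < x := hy.trans_le hyx
  rcases le_or_gt 0 e with he | he
  · calc y ^ e ≤ x ^ e := Real.rpow_le_rpow hy.le hyx he
      _ ≤ 2 ^ |e| * x ^ e :=
        le_mul_of_one_le_left (by positivity) (Real.one_le_rpow one_le_two (abs_nonneg e))
  · calc y ^ e ≤ (x / 2) ^ e := Real.rpow_le_rpow_of_nonpos (by positivity) hxy he.le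
      _ = 2 ^ |e| * x ^ e := by
        rw [abs_of_neg he, Real.div_rpow hx.le zero_le_two, Real.rpow_neg zero_le_two]
        ring

theorem integrableOn_Ioi_one_rpow_mul_sub_one_rpow {a e : ℝ} (he : -1 < e) (hae : a + e < -1) :
    IntegrableOn (fun v : ℝ => v ^ a * (v - 1) ^ e) (Ioi 1) := by
  rw [← Ioc_union_Ioi_eq_Ioi one_le_two]
  refine IntegrableOn.union ?_ ?_
  · have hsing : IntegrableOn (fun v : ℝ => (v - 1) ^ e) (Ioc 1 2) := by
      have h := (intervalIntegral.intervalIntegrable_rpow' he (a := 0) (b := 1)).comp_sub_right 1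
      rw [intervalIntegrable_iff_integrableOn_Ioc_of_le (by norm_num)] at h
      norm_num at h
      exact h
    exact hsing.continuousOn_mul_of_subset
      (fun v hv =>
        (Real.continuousAt_rpow_const _ _ (Or.inl (by linarith [hv.1]))).continuousWithinAt)
      isCompact_Icc measurableSet_Ioc Ioc_subset_Icc_self
  · refine ((integrableOn_Ioi_rpow_of_lt hae zero_lt_two).const_mul (2 ^ |e|)).mono'
      (by fun_prop) (ae_restrict_of_forall_mem measurableSet_Ioi fun v (hv : 2 < v) => ?_)
    have hv0 : 0 < v := by linarith
    have hv1 : 0 < v - 1 := by linarith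
    rw [Real.norm_of_nonneg (by positivity), Real.rpow_add hv0, mul_left_comm]
    exact mul_le_mul_of_nonneg_left
      (rpow_le_two_rpow_abs_mul e hv1 (by linarith) (by linarith)) (by positivity)

theorem setIntegral_pos_of_forall_pos {X : Type*} [MeasurableSpace X] {μ : Measure X} {s : Set X}
    {f : X → ℝ} (hs : MeasurableSet s) (hμs : 0 < μ s) (hf : IntegrableOn f s μ)
    (hpos : ∀ x ∈ s, 0 < f x) : 0 < ∫ x in s, f x ∂μ := by
  rw [setIntegral_pos_iff_support_of_nonneg_ae
    (ae_restrict_of_forall_mem hs fun x hx => (hpos x hx).le) hf]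
  exact hμs.trans_le (measure_mono fun x hx => ⟨(hpos x hx).ne', hx⟩)

theorem stronglyMeasurable_setIntegral_Ioi {f : ℝ → ℝ → ℝ} (hf : Measurable (Function.uncurry f)) :
    StronglyMeasurable (fun x => ∫ y in Ioi x, f x y) := by
  have hind : Measurable (Function.uncurry fun x y => (Ioi x).indicator (f x) y) := by
    have : (Function.uncurry fun x y => (Ioi x).indicator (f x) y)
        = {p : ℝ × ℝ | p.1 < p.2}.indicator (Function.uncurry f) := by
      ext ⟨x, y⟩
      simp only [Function.uncurry, indicator_apply, mem_Ioi, mem_ofPred_eq]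
    rw [this]
    exact hf.indicator (measurableSet_lt measurable_fst measurable_snd)
  simp_rw [← integral_indicator measurableSet_Ioi]
  exact hind.stronglyMeasurable.integral_prod_right'

/-- `f(0,s,1;v)` without its factor `s^{2/κ}(1-s)^{2/κ}`. -/
noncomputable def oneCurveKernel (κ s v : ℝ) : ℝ :=
  v ^ (-(4/κ)) * (v - s) ^ (-(4/κ)) * (v - 1) ^ (-(4/κ))

/-- The integrand of `Z(s,b)` without its factors that do not depend on `v₁, v₂`. -/
noncomputable def twoCurveKernel (κ b s v₂ v₁ : ℝ) : ℝ :=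
  oneCurveKernel κ s v₁ * oneCurveKernel κ s v₂ * (v₁ - v₂) ^ (8/κ)
    * (v₁ - b * s) ^ (8/κ - 2) * (v₂ - b * s) ^ (8/κ - 2)

section Kernels

variable {κ b s v v₁ v₂ : ℝ}

theorem oneCurveKernel_pos (hs : s < 1) (hv : 1 < v) : 0 < oneCurveKernel κ s v := by
  have : 0 < v - s := by linarith
  have : 0 < v - 1 := by linarith
  unfold oneCurveKernel
  positivity

theorem oneCurveKernel_zero (hv : 0 < v) :
    oneCurveKernel κ 0 v = v ^ (-(8/κ)) * (v - 1) ^ ((1 - 4/κ) - 1) := by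
  rw [oneCurveKernel, sub_zero, ← Real.rpow_add hv]
  ring_nf

theorem oneCurveKernel_le (hs0 : 0 ≤ s) (hs : s ≤ 2⁻¹) (hv : 1 < v) :
    oneCurveKernel κ s v ≤ 2 ^ |4/κ| * oneCurveKernel κ 0 v := by
  have hvs : (v - s) ^ (-(4/κ)) ≤ 2 ^ |4/κ| * (v - 0) ^ (-(4/κ)) := by
    rw [← abs_neg, sub_zero]
    exact rpow_le_two_rpow_abs_mul _ (by linarith) (by linarith) (by linarith)
  have : 0 < v - 1 := by linarith
  unfold oneCurveKernel
  calc v ^ (-(4/κ)) * (v - s) ^ (-(4/κ)) * (v - 1) ^ (-(4/κ))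
      ≤ v ^ (-(4/κ)) * (2 ^ |4/κ| * (v - 0) ^ (-(4/κ))) * (v - 1) ^ (-(4/κ)) := by gcongr
    _ = _ := by ring

theorem twoCurveKernel_pos (hb1 : b ≤ 1) (hs0 : 0 ≤ s) (hs : s < 1)
    (hv₂ : 1 < v₂) (hv₁ : v₂ < v₁) : 0 < twoCurveKernel κ b s v₂ v₁ := by
  have hbs : b * s < 1 := by nlinarith
  have := oneCurveKernel_pos (κ := κ) hs hv₂
  have := oneCurveKernel_pos (κ := κ) hs (hv₂.trans hv₁)
  have : 0 < v₁ - v₂ := by linarith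
  have : 0 < v₁ - b * s := by linarith
  have : 0 < v₂ - b * s := by linarith
  unfold twoCurveKernel
  positivity

theorem twoCurveKernel_zero (hv₂ : 0 < v₂) (hv₁ : v₂ < v₁) :
    twoCurveKernel κ b 0 v₂ v₁ = (v₁ - 1) ^ (-(4/κ)) * (v₂ - 1) ^ (-(4/κ)) * (v₁ - v₂) ^ (8/κ)
      * v₁ ^ (-2 : ℝ) * v₂ ^ (-2 : ℝ) := by
  have hv₁0 : 0 < v₁ := hv₂.trans hv₁
  have hcombine : ∀ {w : ℝ}, 0 < w → w ^ (-(4/κ)) * w ^ (-(4/κ)) * w ^ (8/κ - 2) = w ^ (-2 : ℝ) :=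
    fun hw => by rw [← Real.rpow_add hw, ← Real.rpow_add hw]; ring_nf
  simp only [twoCurveKernel, oneCurveKernel, mul_zero, sub_zero]
  rw [← hcombine hv₁0, ← hcombine hv₂]
  ring

theorem twoCurveKernel_le (hb0 : 0 ≤ b) (hb1 : b ≤ 1) (hs0 : 0 ≤ s) (hs : s ≤ 2⁻¹)
    (hv₂ : 1 < v₂) (hv₁ : v₂ < v₁) :
    twoCurveKernel κ b s v₂ v₁ ≤ (2 ^ |4/κ| * 2 ^ |8/κ - 2|) ^ 2 * twoCurveKernel κ b 0 v₂ v₁ := by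
  have hbs : b * s ≤ 2⁻¹ := (mul_le_of_le_one_left hs0 hb1).trans hs
  have hshift : ∀ {w : ℝ}, 1 < w → (w - b * s) ^ (8/κ - 2) ≤ 2 ^ |8/κ - 2| * w ^ (8/κ - 2) :=
    fun hw => rpow_le_two_rpow_abs_mul _ (by linarith) (by linarith) (by nlinarith)
  have := oneCurveKernel_pos (κ := κ) (s := s) (by linarith) hv₂
  have := oneCurveKernel_pos (κ := κ) (s := s) (by linarith) (hv₂.trans hv₁)
  have := oneCurveKernel_pos (κ := κ) zero_lt_one hv₂
  have := oneCurveKernel_pos (κ := κ) zero_lt_one (hv₂.trans hv₁)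
  have : 0 < v₂ := by linarith
  have : 0 < v₁ := by linarith
  have : 0 < v₁ - v₂ := by linarith
  have : 0 < v₁ - b * s := by linarith
  have : 0 < v₂ - b * s := by linarith
  unfold twoCurveKernel
  calc
    _ ≤ (2 ^ |4/κ| * oneCurveKernel κ 0 v₁) * (2 ^ |4/κ| * oneCurveKernel κ 0 v₂)
        * (v₁ - v₂) ^ (8/κ) * (2 ^ |8/κ - 2| * v₁ ^ (8/κ - 2))
        * (2 ^ |8/κ - 2| * v₂ ^ (8/κ - 2)) := by
      gcongr
      exacts [oneCurveKernel_le hs0 hs (hv₂.trans hv₁), oneCurveKernel_le hs0 hs hv₂,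
        hshift (hv₂.trans hv₁), hshift hv₂]
    _ = _ := by rw [mul_zero, sub_zero, sub_zero]; ring

theorem twoCurveKernel_zero_le (hκ : 0 < κ) (hv₂ : 1 < v₂) (hv₁ : v₂ < v₁) :
    twoCurveKernel κ b 0 v₂ v₁
      ≤ v₂ ^ (-2 : ℝ) * (v₂ - 1) ^ (-(4/κ)) * (v₁ ^ (8/κ - 2) * (v₁ - 1) ^ (-(4/κ))) := by
  have hv₁0 : 0 < v₁ := by linarith
  have : 0 < v₂ := by linarith
  have : 0 < v₁ - 1 := by linarith
  have : 0 < v₂ - 1 := by linarith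
  rw [twoCurveKernel_zero (by linarith) hv₁, sub_eq_add_neg (8/κ), Real.rpow_add hv₁0]
  calc
    _ ≤ (v₁ - 1) ^ (-(4/κ)) * (v₂ - 1) ^ (-(4/κ)) * v₁ ^ (8/κ) * v₁ ^ (-2 : ℝ) * v₂ ^ (-2 : ℝ) := by
      gcongr
      linarith
    _ = _ := by ring

theorem twoCurveKernel_le_mul (hκ : 0 < κ) (hb0 : 0 ≤ b) (hb1 : b ≤ 1) (hs0 : 0 ≤ s)
    (hs : s ≤ 2⁻¹) (hv₂ : 1 < v₂) (hv₁ : v₂ < v₁) :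
    twoCurveKernel κ b s v₂ v₁ ≤ (2 ^ |4/κ| * 2 ^ |8/κ - 2|) ^ 2
      * (v₂ ^ (-2 : ℝ) * (v₂ - 1) ^ (-(4/κ))) * (v₁ ^ (8/κ - 2) * (v₁ - 1) ^ (-(4/κ))) := by
  rw [mul_assoc]
  exact (twoCurveKernel_le hb0 hb1 hs0 hs hv₂ hv₁).trans
    (mul_le_mul_of_nonneg_left (twoCurveKernel_zero_le hκ hv₂ hv₁) (by positivity))

end Kernels

section Limits

variable {κ b s v₂ : ℝ}

theorem integrableOn_oneCurveKernel_zero (h4 : 4 < κ) (h12 : κ < 12) :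
    IntegrableOn (oneCurveKernel κ 0) (Ioi 1) := by
  have h : IntegrableOn (fun v : ℝ => v ^ (-(8/κ)) * (v - 1) ^ ((1 - 4/κ) - 1)) (Ioi 1) := by
    have : 4/κ < 1 := (div_lt_one (by linarith)).mpr h4
    have : 1 < 12/κ := (one_lt_div (by linarith)).mpr h12
    have : 12/κ = 8/κ + 4/κ := by ring
    exact integrableOn_Ioi_one_rpow_mul_sub_one_rpow (by linarith) (by linarith)
  exact h.congr_fun (fun v hv => (oneCurveKernel_zero (zero_lt_one.trans hv)).symm)
    measurableSet_Ioi

theorem integral_oneCurveKernel_zero (h4 : 4 < κ) (h12 : κ < 12) :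
    ∫ v in Ioi 1, oneCurveKernel κ 0 v = beta (1 - 4/κ) (12/κ - 1) := by
  have : 4/κ < 1 := (div_lt_one (by linarith)).mpr h4
  have : 1 < 12/κ := (one_lt_div (by linarith)).mpr h12
  have : 12/κ = 8/κ + 4/κ := by ring
  rw [setIntegral_congr_fun measurableSet_Ioi
    (fun v hv => oneCurveKernel_zero (zero_lt_one.trans hv)),
    integral_Ioi_one_rpow_neg_mul_sub_one_rpow (by linarith) (by linarith), beta_comm]
  ring_nf

theorem tendsto_integral_oneCurveKernel (h4 : 4 < κ) (h12 : κ < 12) :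
    Tendsto (fun s => ∫ v in Ioi 1, oneCurveKernel κ s v) (𝓝[>] 0)
      (𝓝 (∫ v in Ioi 1, oneCurveKernel κ 0 v)) := by
  refine tendsto_integral_filter_of_dominated_convergence
    (fun v => 2 ^ |4/κ| * oneCurveKernel κ 0 v)
    (Eventually.of_forall fun s => by unfold oneCurveKernel; fun_prop) ?_
    ((integrableOn_oneCurveKernel_zero h4 h12).const_mul _)
    (ae_restrict_of_forall_mem measurableSet_Ioi fun v (hv : 1 < v) => ?_)
  · filter_upwards [Ioc_mem_nhdsGT (by norm_num : (0 : ℝ) < 2⁻¹)] with s hs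
    refine ae_restrict_of_forall_mem measurableSet_Ioi fun v (hv : 1 < v) => ?_
    rw [Real.norm_of_nonneg (oneCurveKernel_pos (by linarith [hs.2]) hv).le]
    exact oneCurveKernel_le hs.1.le hs.2 hv
  · have hcont : ContinuousAt (fun s => oneCurveKernel κ s v) 0 := by
      unfold oneCurveKernel
      fun_prop (disch := simp only [sub_zero]; left; linarith)
    exact hcont.tendsto.mono_left nhdsWithin_le_nhds

theorem integrableOn_innerMajorant (h4 : 4 < κ) :
    IntegrableOn (fun v : ℝ => v ^ (8/κ - 2) * (v - 1) ^ (-(4/κ))) (Ioi 1) := by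
  have : 4/κ < 1 := (div_lt_one (by linarith)).mpr h4
  have : 8/κ = 4/κ + 4/κ := by ring
  exact integrableOn_Ioi_one_rpow_mul_sub_one_rpow (by linarith) (by linarith)

theorem integrableOn_outerMajorant (h4 : 4 < κ) :
    IntegrableOn (fun v₂ : ℝ => (2 ^ |4/κ| * 2 ^ |8/κ - 2|) ^ 2
      * (v₂ ^ (-2 : ℝ) * (v₂ - 1) ^ (-(4/κ))) * ∫ v in Ioi 1, v ^ (8/κ - 2) * (v - 1) ^ (-(4/κ)))
      (Ioi 1) := by
  have : 0 < 4/κ := by positivity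
  have : 4/κ < 1 := (div_lt_one (by linarith)).mpr h4
  have hint : IntegrableOn (fun v₂ : ℝ => v₂ ^ (-2 : ℝ) * (v₂ - 1) ^ (-(4/κ))) (Ioi 1) :=
    integrableOn_Ioi_one_rpow_mul_sub_one_rpow (by linarith) (by linarith)
  exact (hint.const_mul _).mul_const _

theorem integrableOn_twoCurveKernel (h4 : 4 < κ) (hb0 : 0 ≤ b) (hb1 : b ≤ 1) (hs0 : 0 ≤ s)
    (hs : s ≤ 2⁻¹) (hv₂ : 1 < v₂) : IntegrableOn (twoCurveKernel κ b s v₂) (Ioi v₂) :=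
  (((integrableOn_innerMajorant h4).mono_set (Ioi_subset_Ioi hv₂.le)).const_mul _).mono'
    (by unfold twoCurveKernel oneCurveKernel; fun_prop)
    (ae_restrict_of_forall_mem measurableSet_Ioi fun v₁ (hv₁ : v₂ < v₁) => by
      rw [Real.norm_of_nonneg (twoCurveKernel_pos hb1 hs0 (by linarith) hv₂ hv₁).le]
      exact twoCurveKernel_le_mul (by linarith) hb0 hb1 hs0 hs hv₂ hv₁)

theorem setIntegral_twoCurveKernel_le (h4 : 4 < κ) (hb0 : 0 ≤ b) (hb1 : b ≤ 1) (hs0 : 0 ≤ s)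
    (hs : s ≤ 2⁻¹) (hv₂ : 1 < v₂) :
    ∫ v₁ in Ioi v₂, twoCurveKernel κ b s v₂ v₁ ≤ (2 ^ |4/κ| * 2 ^ |8/κ - 2|) ^ 2
      * (v₂ ^ (-2 : ℝ) * (v₂ - 1) ^ (-(4/κ)))
      * ∫ v in Ioi 1, v ^ (8/κ - 2) * (v - 1) ^ (-(4/κ)) := by
  have hmaj := integrableOn_innerMajorant h4
  calc
    _ ≤ ∫ v₁ in Ioi v₂, (2 ^ |4/κ| * 2 ^ |8/κ - 2|) ^ 2 * (v₂ ^ (-2 : ℝ) * (v₂ - 1) ^ (-(4/κ)))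
          * (v₁ ^ (8/κ - 2) * (v₁ - 1) ^ (-(4/κ))) :=
      setIntegral_mono_on (integrableOn_twoCurveKernel h4 hb0 hb1 hs0 hs hv₂)
        ((hmaj.mono_set (Ioi_subset_Ioi hv₂.le)).const_mul _) measurableSet_Ioi
        fun v₁ hv₁ => twoCurveKernel_le_mul (by linarith) hb0 hb1 hs0 hs hv₂ hv₁
    _ = _ * ∫ v₁ in Ioi v₂, v₁ ^ (8/κ - 2) * (v₁ - 1) ^ (-(4/κ)) := integral_const_mul _ _
    _ ≤ _ := by
      have : 0 < v₂ - 1 := by linarith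
      gcongr
      refine ae_restrict_of_forall_mem measurableSet_Ioi fun v (hv : 1 < v) => ?_
      have : 0 < v - 1 := by linarith
      positivity

theorem tendsto_setIntegral_twoCurveKernel (h4 : 4 < κ) (hb0 : 0 ≤ b) (hb1 : b ≤ 1)
    (hv₂ : 1 < v₂) :
    Tendsto (fun s => ∫ v₁ in Ioi v₂, twoCurveKernel κ b s v₂ v₁) (𝓝[>] 0)
      (𝓝 (∫ v₁ in Ioi v₂, twoCurveKernel κ b 0 v₂ v₁)) := by
  refine tendsto_integral_filter_of_dominated_convergence _
    (Eventually.of_forall fun s => by unfold twoCurveKernel oneCurveKernel; fun_prop) ?_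
    (((integrableOn_innerMajorant h4).mono_set (Ioi_subset_Ioi hv₂.le)).const_mul
      ((2 ^ |4/κ| * 2 ^ |8/κ - 2|) ^ 2 * (v₂ ^ (-2 : ℝ) * (v₂ - 1) ^ (-(4/κ)))))
    (ae_restrict_of_forall_mem measurableSet_Ioi fun v₁ (hv₁ : v₂ < v₁) => ?_)
  · filter_upwards [Ioc_mem_nhdsGT (by norm_num : (0 : ℝ) < 2⁻¹)] with s hs
    refine ae_restrict_of_forall_mem measurableSet_Ioi fun v₁ (hv₁ : v₂ < v₁) => ?_
    rw [Real.norm_of_nonneg (twoCurveKernel_pos hb1 hs.1.le (by linarith [hs.2]) hv₂ hv₁).le]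
    exact twoCurveKernel_le_mul (by linarith) hb0 hb1 hs.1.le hs.2 hv₂ hv₁
  · have hcont : ContinuousAt (fun s => twoCurveKernel κ b s v₂ v₁) 0 := by
      unfold twoCurveKernel oneCurveKernel
      fun_prop (disch := simp only [sub_zero, mul_zero]; left; linarith)
    exact hcont.tendsto.mono_left nhdsWithin_le_nhds

theorem tendsto_integral_twoCurveKernel (h4 : 4 < κ) (hb0 : 0 ≤ b) (hb1 : b ≤ 1) :
    Tendsto (fun s => ∫ v₂ in Ioi 1, ∫ v₁ in Ioi v₂, twoCurveKernel κ b s v₂ v₁) (𝓝[>] 0)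
      (𝓝 (∫ v₂ in Ioi 1, ∫ v₁ in Ioi v₂, twoCurveKernel κ b 0 v₂ v₁)) := by
  refine tendsto_integral_filter_of_dominated_convergence _
    (Eventually.of_forall fun s => (stronglyMeasurable_setIntegral_Ioi
      (by unfold twoCurveKernel oneCurveKernel; fun_prop)).aestronglyMeasurable) ?_
    (integrableOn_outerMajorant h4)
    (ae_restrict_of_forall_mem measurableSet_Ioi fun v₂ (hv₂ : 1 < v₂) =>
      tendsto_setIntegral_twoCurveKernel h4 hb0 hb1 hv₂)
  filter_upwards [Ioc_mem_nhdsGT (by norm_num : (0 : ℝ) < 2⁻¹)] with s hs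
  refine ae_restrict_of_forall_mem measurableSet_Ioi fun v₂ (hv₂ : 1 < v₂) => ?_
  rw [Real.norm_of_nonneg (setIntegral_nonneg measurableSet_Ioi fun v₁ (hv₁ : v₂ < v₁) =>
    (twoCurveKernel_pos hb1 hs.1.le (by linarith [hs.2]) hv₂ hv₁).le)]
  exact setIntegral_twoCurveKernel_le h4 hb0 hb1 hs.1.le hs.2 hv₂

theorem integral_twoCurveKernel_zero_pos (h4 : 4 < κ) (hb0 : 0 ≤ b) (hb1 : b ≤ 1) :
    0 < ∫ v₂ in Ioi 1, ∫ v₁ in Ioi v₂, twoCurveKernel κ b 0 v₂ v₁ := by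
  have hinner : ∀ v₂ ∈ Ioi (1 : ℝ), 0 < ∫ v₁ in Ioi v₂, twoCurveKernel κ b 0 v₂ v₁ :=
    fun v₂ (hv₂ : 1 < v₂) => setIntegral_pos_of_forall_pos measurableSet_Ioi (by simp)
      (integrableOn_twoCurveKernel h4 hb0 hb1 le_rfl (by norm_num) hv₂)
      fun v₁ hv₁ => twoCurveKernel_pos hb1 le_rfl zero_lt_one hv₂ hv₁
  refine setIntegral_pos_of_forall_pos measurableSet_Ioi (by simp) ?_ hinner
  refine (integrableOn_outerMajorant h4).mono' (stronglyMeasurable_setIntegral_Ioi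
      (by unfold twoCurveKernel oneCurveKernel; fun_prop)).aestronglyMeasurable
    (ae_restrict_of_forall_mem measurableSet_Ioi fun v₂ hv₂ => ?_)
  rw [Real.norm_of_nonneg (hinner v₂ hv₂).le]
  exact setIntegral_twoCurveKernel_le h4 hb0 hb1 le_rfl (by norm_num) hv₂

end Limits

theorem integral_twoCurveKernel_zero_eq (κ b : ℝ) :
    ∫ v₂ in Ioi 1, ∫ v₁ in Ioi v₂, twoCurveKernel κ b 0 v₂ v₁
      = ∫ v₂ in Ioi 1, ∫ v₁ in Ioi v₂, (v₁ - 1) ^ (-(4/κ)) * (v₂ - 1) ^ (-(4/κ))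
          * (v₁ - v₂) ^ (8/κ) * v₁ ^ (-2 : ℝ) * v₂ ^ (-2 : ℝ) :=
  setIntegral_congr_fun measurableSet_Ioi fun _ hv₂ => setIntegral_congr_fun measurableSet_Ioi
    fun _ hv₁ => twoCurveKernel_zero (zero_lt_one.trans hv₂) hv₁

theorem integral_oneCurve_eq_mul_integral_oneCurveKernel (κ s : ℝ) :
    ∫ v in Ioi 1, s ^ (2/κ) * (1 - s) ^ (2/κ) * v ^ (-(4/κ)) * (v - s) ^ (-(4/κ))
        * (v - 1) ^ (-(4/κ))
      = s ^ (2/κ) * (1 - s) ^ (2/κ) * ∫ v in Ioi 1, oneCurveKernel κ s v := by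
  rw [← integral_const_mul]
  simp only [oneCurveKernel, mul_assoc]

theorem integral_twoCurve_eq_mul_integral_twoCurveKernel (κ b s : ℝ) :
    ∫ v₂ in Ioi 1, ∫ v₁ in Ioi v₂,
        (s ^ (2/κ) * (1 - s) ^ (2/κ)
          * (v₁ ^ (-(4/κ)) * (v₁ - s) ^ (-(4/κ)) * (v₁ - 1) ^ (-(4/κ)))
          * (v₂ ^ (-(4/κ)) * (v₂ - s) ^ (-(4/κ)) * (v₂ - 1) ^ (-(4/κ)))
          * (v₁ - v₂) ^ (8/κ))
        * ((b * s) ^ (1 - 4/κ) * ((1 - b) * s) ^ (1 - 4/κ) * (1 - b * s) ^ (1 - 4/κ)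
          * (v₁ - b * s) ^ (8/κ - 2) * (v₂ - b * s) ^ (8/κ - 2))
      = s ^ (2/κ) * (1 - s) ^ (2/κ)
          * ((b * s) ^ (1 - 4/κ) * ((1 - b) * s) ^ (1 - 4/κ) * (1 - b * s) ^ (1 - 4/κ))
          * ∫ v₂ in Ioi 1, ∫ v₁ in Ioi v₂, twoCurveKernel κ b s v₂ v₁ := by
  simp_rw [← integral_const_mul]
  congr! 4 with v₂ _ v₁
  simp only [twoCurveKernel, oneCurveKernel]
  ring

theorem rescaled_ratio_eq {κ b s : ℝ} (hb0 : 0 ≤ b) (hb1 : b ≤ 1) (hs0 : 0 < s) (hs1 : s < 1)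
    (C N D : ℝ) :
    s ^ (8/κ - 2) * (s ^ (2/κ) * (1 - s) ^ (2/κ)
        * ((b * s) ^ (1 - 4/κ) * ((1 - b) * s) ^ (1 - 4/κ) * (1 - b * s) ^ (1 - 4/κ)) * N)
        / (C * (s ^ (2/κ) * (1 - s) ^ (2/κ) * D))
      = b ^ (1 - 4/κ) * (1 - b) ^ (1 - 4/κ) * ((1 - b * s) ^ (1 - 4/κ) * (N / (C * D))) := by
  have hA : s ^ (2/κ) * (1 - s) ^ (2/κ) ≠ 0 := by
    have : 0 < 1 - s := by linarith
    positivity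
  have hscale : s ^ (8/κ - 2) * (s ^ (1 - 4/κ) * s ^ (1 - 4/κ)) = 1 := by
    rw [← Real.rpow_add hs0, ← Real.rpow_add hs0,
      show 8/κ - 2 + (1 - 4/κ + (1 - 4/κ)) = 0 by ring, Real.rpow_zero]
  rw [Real.mul_rpow hb0 hs0.le, Real.mul_rpow (by linarith) hs0.le]
  calc _ = (s ^ (8/κ - 2) * (s ^ (1 - 4/κ) * s ^ (1 - 4/κ)))
        * ((s ^ (2/κ) * (1 - s) ^ (2/κ)) / (s ^ (2/κ) * (1 - s) ^ (2/κ)))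
        * (b ^ (1 - 4/κ) * (1 - b) ^ (1 - 4/κ) * ((1 - b * s) ^ (1 - 4/κ) * (N / (C * D)))) := by
        ring
    _ = _ := by rw [hscale, div_self hA, one_mul, one_mul]

/-- For κ ∈ (4,8), there is a constant C = I(κ)/(C_κ·B(1−4/κ,12/κ−1)) ∈ (0,∞),
independent of b, such that for every b ∈ (0,1),
lim_{s→0⁺} s^{8/κ−2}·Z(s,b)/(C_κ·∫₁^∞ f(0,s,1;v) dv) = C·b^{1−4/κ}(1−b)^{1−4/κ},
where C_κ = B(1−4/κ, 8/κ−1). -/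
theorem stmt_9 (κ : ℝ) (h1 : 4 < κ) (h2 : κ < 8) :
    ∃ C : ℝ, 0 < C ∧
      C = (∫ v₂ in Set.Ioi (1:ℝ), ∫ v₁ in Set.Ioi v₂,
            (v₁ - 1) ^ (-(4/κ)) * (v₂ - 1) ^ (-(4/κ)) * (v₁ - v₂) ^ (8/κ)
              * v₁ ^ (-2 : ℝ) * v₂ ^ (-2 : ℝ))
          / ((Real.Gamma (1 - 4/κ) * Real.Gamma (8/κ - 1)
                / Real.Gamma ((1 - 4/κ) + (8/κ - 1)))
            * (Real.Gamma (1 - 4/κ) * Real.Gamma (12/κ - 1)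
                / Real.Gamma ((1 - 4/κ) + (12/κ - 1)))) ∧
      ∀ b ∈ Set.Ioo (0:ℝ) 1,
        Filter.Tendsto
          (fun s : ℝ => s ^ (8/κ - 2) *
            (∫ v₂ in Set.Ioi (1:ℝ), ∫ v₁ in Set.Ioi v₂,
              (s ^ (2/κ) * (1 - s) ^ (2/κ)
                * (v₁ ^ (-(4/κ)) * (v₁ - s) ^ (-(4/κ)) * (v₁ - 1) ^ (-(4/κ)))
                * (v₂ ^ (-(4/κ)) * (v₂ - s) ^ (-(4/κ)) * (v₂ - 1) ^ (-(4/κ)))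
                * (v₁ - v₂) ^ (8/κ))
              * ((b * s) ^ (1 - 4/κ) * ((1 - b) * s) ^ (1 - 4/κ) * (1 - b * s) ^ (1 - 4/κ)
                * (v₁ - b * s) ^ (8/κ - 2) * (v₂ - b * s) ^ (8/κ - 2)))
            / ((Real.Gamma (1 - 4/κ) * Real.Gamma (8/κ - 1)
                  / Real.Gamma ((1 - 4/κ) + (8/κ - 1)))
              * ∫ v in Set.Ioi (1:ℝ),
                  s ^ (2/κ) * (1 - s) ^ (2/κ) * v ^ (-(4/κ)) * (v - s) ^ (-(4/κ))
                    * (v - 1) ^ (-(4/κ))))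
          (nhdsWithin 0 (Set.Ioi 0))
          (nhds (C * (b ^ (1 - 4/κ) * (1 - b) ^ (1 - 4/κ)))) := by
  have hp : 4/κ < 1 := (div_lt_one (by linarith)).mpr h1
  have hp' : 1 < 8/κ := (one_lt_div (by linarith)).mpr h2
  have : 12/κ = 8/κ + 4/κ := by ring
  have : 0 < 4/κ := by positivity
  have hCκ : 0 < beta (1 - 4/κ) (8/κ - 1) := beta_pos (by linarith) (by linarith)
  have hB : 0 < beta (1 - 4/κ) (12/κ - 1) := beta_pos (by linarith) (by linarith)
  refine ⟨_, ?_, rfl, fun b ⟨hb0, hb1⟩ => ?_⟩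
  · rw [← integral_twoCurveKernel_zero_eq κ 0]
    exact div_pos (integral_twoCurveKernel_zero_pos h1 le_rfl zero_le_one) (mul_pos hCκ hB)
  have hcorner : Tendsto (fun s : ℝ => (1 - b * s) ^ (1 - 4/κ)) (𝓝[>] 0) (𝓝 1) := by
    have : ContinuousAt (fun s : ℝ => (1 - b * s) ^ (1 - 4/κ)) 0 := by fun_prop (disch := simp)
    simpa using this.tendsto.mono_left nhdsWithin_le_nhds
  have hlim := (hcorner.mul ((tendsto_integral_twoCurveKernel h1 hb0.le hb1.le).div
    ((tendsto_integral_oneCurveKernel h1 (by linarith)).const_mul (beta (1 - 4/κ) (8/κ - 1)))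
    (by rw [integral_oneCurveKernel_zero h1 (by linarith)]; positivity))).const_mul
    (b ^ (1 - 4/κ) * (1 - b) ^ (1 - 4/κ))
  rw [integral_oneCurveKernel_zero h1 (by linarith), integral_twoCurveKernel_zero_eq, one_mul,
    mul_comm (b ^ (1 - 4/κ) * (1 - b) ^ (1 - 4/κ))] at hlim
  simp only [integral_twoCurve_eq_mul_integral_twoCurveKernel,
    integral_oneCurve_eq_mul_integral_oneCurveKernel]
  refine hlim.congr' ?_
  filter_upwards [Ioo_mem_nhdsGT one_pos] with s hs
  exact (rescaled_ratio_eq hb0.le hb1.le hs.1 hs.2 _ _ _).symm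
end

section
/- For every s ∈ (0,1), the change of variables t = u/s gives ∫₀^s (u·(s−u)·(1−u))^{−1/2} du = ∫₀¹ (t·(1−t)·(1−s·t))^{−1/2} dt. Moreover there exists a constant C ∈ (0,∞) such that for all s ∈ (0,1/2], π ≤ ∫₀^s (u·(s−u)·(1−u))^{−1/2} du ≤ π + C·s; in particular lim_{s→0⁺} ∫₀^s (u·(s−u)·(1−u))^{−1/2} du = π. -/
/-!
The substitution u = s t gives D(s) = ∫₀¹ (t(1−t))^{−1/2} (1−st)^{−1/2} dt. For 0 ≤ st ≤ s ≤ 1/2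
the factor (1−st)^{−1/2} lies between 1 and 1 + s, while ∫₀¹ (t(1−t))^{−1/2} dt = B(1/2, 1/2)
= Γ(1/2)² = π. Hence π ≤ D(s) ≤ (1 + s) π, and D(s) → π as s → 0⁺ by squeezing.
-/

open MeasureTheory Set Real

lemma ofReal_rpow_mul_one_sub_rpow {a b x : ℝ} (hx : x ∈ Icc (0:ℝ) 1) :
    ((x ^ (a - 1) * (1 - x) ^ (b - 1) : ℝ) : ℂ)
      = (x : ℂ) ^ ((a : ℂ) - 1) * (1 - (x : ℂ)) ^ ((b : ℂ) - 1) := by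
  push_cast [Complex.ofReal_cpow hx.1, Complex.ofReal_cpow (sub_nonneg.2 hx.2)]
  rfl

theorem integrableOn_rpow_mul_one_sub_rpow {a b : ℝ} (ha : 0 < a) (hb : 0 < b) :
    IntegrableOn (fun x : ℝ => x ^ (a - 1) * (1 - x) ^ (b - 1)) (Ioo 0 1) := by
  have h := Complex.betaIntegral_convergent (u := a) (v := b) (by simpa) (by simpa)
  rw [intervalIntegrable_iff_integrableOn_Ioo_of_le zero_le_one] at h
  have h' := h.congr_fun (fun x hx => (ofReal_rpow_mul_one_sub_rpow (a := a) (b := b)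
    (Ioo_subset_Icc_self hx)).symm) measurableSet_Ioo
  exact h'.re

theorem integral_rpow_mul_one_sub_rpow {a b : ℝ} (ha : 0 < a) (hb : 0 < b) :
    ∫ x in Ioo 0 1, x ^ (a - 1) * (1 - x) ^ (b - 1) = ProbabilityTheory.beta a b := by
  have h : Complex.betaIntegral a b
      = ((∫ x in Ioo 0 1, x ^ (a - 1) * (1 - x) ^ (b - 1) : ℝ) : ℂ) := by
    rw [Complex.betaIntegral, intervalIntegral.integral_of_le zero_le_one,
      integral_Ioc_eq_integral_Ioo, ← integral_complex_ofReal]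
    exact setIntegral_congr_fun measurableSet_Ioo fun x hx =>
      (ofReal_rpow_mul_one_sub_rpow (Ioo_subset_Icc_self hx)).symm
  rw [ProbabilityTheory.beta_eq_betaIntegralReal a b ha hb, h, Complex.ofReal_re]

lemma beta_one_half_one_half : ProbabilityTheory.beta (1/2) (1/2) = π := by
  rw [ProbabilityTheory.beta, Gamma_one_half_eq]
  norm_num [mul_self_sqrt pi_pos.le]

lemma mul_one_sub_rpow_neg_half_eqOn :
    EqOn (fun t : ℝ => (t * (1 - t)) ^ (-(1/2) : ℝ))
      (fun t => t ^ ((1/2 : ℝ) - 1) * (1 - t) ^ ((1/2 : ℝ) - 1)) (Icc 0 1) := fun t ht => by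
  norm_num [mul_rpow ht.1 (sub_nonneg.2 ht.2)]

theorem integrableOn_mul_one_sub_rpow_neg_half :
    IntegrableOn (fun t : ℝ => (t * (1 - t)) ^ (-(1/2) : ℝ)) (Ioo 0 1) :=
  (integrableOn_rpow_mul_one_sub_rpow one_half_pos one_half_pos).congr_fun
    (mul_one_sub_rpow_neg_half_eqOn.mono Ioo_subset_Icc_self).symm measurableSet_Ioo

theorem integral_mul_one_sub_rpow_neg_half :
    ∫ t in Ioo 0 1, (t * (1 - t)) ^ (-(1/2) : ℝ) = π := by
  rw [setIntegral_congr_fun measurableSet_Ioo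
      (mul_one_sub_rpow_neg_half_eqOn.mono Ioo_subset_Icc_self),
    integral_rpow_mul_one_sub_rpow one_half_pos one_half_pos, beta_one_half_one_half]

theorem setIntegral_Ioo_zero_eq_smul_comp_mul {E : Type*} [NormedAddCommGroup E]
    [NormedSpace ℝ E] (f : ℝ → E) {s : ℝ} (hs : 0 < s) :
    ∫ u in Ioo 0 s, f u = s • ∫ t in Ioo 0 1, f (s * t) := by
  simp only [← integral_Ioc_eq_integral_Ioo, ← intervalIntegral.integral_of_le hs.le,
    ← intervalIntegral.integral_of_le zero_le_one]
  rw [intervalIntegral.smul_integral_comp_mul_left, mul_zero, mul_one]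

lemma one_le_one_sub_rpow_neg_half {x : ℝ} (h0 : 0 ≤ x) (h1 : x < 1) :
    1 ≤ (1 - x) ^ (-(1/2) : ℝ) :=
  one_le_rpow_of_pos_of_le_one_of_nonpos (by linarith) (by linarith) (by norm_num)

lemma one_sub_rpow_neg_half_le {x : ℝ} (h0 : 0 ≤ x) (h1 : x ≤ 1/2) :
    (1 - x) ^ (-(1/2) : ℝ) ≤ 1 + x := by
  -- (1 - x)(1 + x)² - 1 = x (1 - x - x²) ≥ 0 for 0 ≤ x ≤ 1/2
  have hsqrt : 1 / (1 + x) ≤ √(1 - x) := by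
    rw [le_sqrt (by positivity) (by linarith), div_pow, one_pow, div_le_iff₀ (by positivity)]
    nlinarith [mul_nonneg h0 (show 0 ≤ 1 - x - x ^ 2 by nlinarith)]
  rw [rpow_neg (by linarith), ← sqrt_eq_rpow]
  simpa using inv_anti₀ (by positivity) hsqrt

lemma rpow_neg_half_le_mul_one_sub_rpow {a x : ℝ} (ha : 0 ≤ a) (h0 : 0 ≤ x) (h1 : x < 1) :
    a ^ (-(1/2) : ℝ) ≤ (a * (1 - x)) ^ (-(1/2) : ℝ) := by
  rw [mul_rpow ha (by linarith)]
  exact le_mul_of_one_le_right (rpow_nonneg ha _) (one_le_one_sub_rpow_neg_half h0 h1)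

lemma mul_one_sub_rpow_neg_half_le {a x : ℝ} (ha : 0 ≤ a) (h0 : 0 ≤ x) (h1 : x ≤ 1/2) :
    (a * (1 - x)) ^ (-(1/2) : ℝ) ≤ (1 + x) * a ^ (-(1/2) : ℝ) := by
  rw [mul_rpow ha (by linarith), mul_comm]
  exact mul_le_mul_of_nonneg_right (one_sub_rpow_neg_half_le h0 h1) (rpow_nonneg ha _)

lemma mul_self_mul_rpow_neg_half {s a : ℝ} (hs : 0 < s) (ha : 0 ≤ a) :
    (s * s * a) ^ (-(1/2) : ℝ) = s⁻¹ * a ^ (-(1/2) : ℝ) := by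
  rw [mul_rpow (by positivity) ha, mul_rpow hs.le hs.le, ← rpow_add hs]
  norm_num [rpow_neg_one]

lemma mul_one_sub_rpow_neg_half_le_of_mem_Ioo {s t : ℝ} (hs0 : 0 ≤ s) (hs1 : s ≤ 1)
    (ht : t ∈ Ioo (0:ℝ) 1) :
    (t * (1 - t)) ^ (-(1/2) : ℝ) ≤ (t * (1 - t) * (1 - s * t)) ^ (-(1/2) : ℝ) :=
  rpow_neg_half_le_mul_one_sub_rpow (mul_nonneg ht.1.le (by linarith [ht.2]))
    (mul_nonneg hs0 ht.1.le) (by nlinarith [ht.1, ht.2])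

lemma rpow_neg_half_le_one_add_mul_of_mem_Ioo {s t : ℝ} (hs0 : 0 ≤ s) (hs1 : s ≤ 1/2)
    (ht : t ∈ Ioo (0:ℝ) 1) :
    (t * (1 - t) * (1 - s * t)) ^ (-(1/2) : ℝ) ≤ (1 + s) * (t * (1 - t)) ^ (-(1/2) : ℝ) := by
  have ha : 0 ≤ t * (1 - t) := mul_nonneg ht.1.le (by linarith [ht.2])
  have hst : s * t ≤ s := mul_le_of_le_one_right hs0 ht.2.le
  calc _ ≤ (1 + s * t) * (t * (1 - t)) ^ (-(1/2) : ℝ) :=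
        mul_one_sub_rpow_neg_half_le ha (mul_nonneg hs0 ht.1.le) (by linarith)
    _ ≤ (1 + s) * (t * (1 - t)) ^ (-(1/2) : ℝ) :=
        mul_le_mul_of_nonneg_right (by linarith) (rpow_nonneg ha _)

lemma integrableOn_rpow_neg_half_mul_one_sub_mul {s : ℝ} (hs0 : 0 ≤ s) (hs1 : s ≤ 1/2) :
    IntegrableOn (fun t : ℝ => (t * (1 - t) * (1 - s * t)) ^ (-(1/2) : ℝ)) (Ioo 0 1) := by
  refine (integrableOn_mul_one_sub_rpow_neg_half.const_mul (1 + s)).mono'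
    (Measurable.aestronglyMeasurable (by fun_prop)) ?_
  refine (ae_restrict_iff' measurableSet_Ioo).2 (.of_forall fun t ht => ?_)
  have hbase : 0 ≤ t * (1 - t) * (1 - s * t) :=
    mul_nonneg (mul_nonneg ht.1.le (by linarith [ht.2])) (by nlinarith [ht.1, ht.2])
  rw [Real.norm_of_nonneg (rpow_nonneg hbase _)]
  exact rpow_neg_half_le_one_add_mul_of_mem_Ioo hs0 hs1 ht

lemma pi_le_integral_rpow_neg_half_mul_one_sub_mul {s : ℝ} (hs0 : 0 ≤ s) (hs1 : s ≤ 1/2) :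
    π ≤ ∫ t in Ioo 0 1, (t * (1 - t) * (1 - s * t)) ^ (-(1/2) : ℝ) :=
  integral_mul_one_sub_rpow_neg_half ▸
    setIntegral_mono_on integrableOn_mul_one_sub_rpow_neg_half
    (integrableOn_rpow_neg_half_mul_one_sub_mul hs0 hs1) measurableSet_Ioo
    fun _ ht => mul_one_sub_rpow_neg_half_le_of_mem_Ioo hs0 (by linarith) ht

lemma integral_rpow_neg_half_mul_one_sub_mul_le {s : ℝ} (hs0 : 0 ≤ s) (hs1 : s ≤ 1/2) :
    ∫ t in Ioo 0 1, (t * (1 - t) * (1 - s * t)) ^ (-(1/2) : ℝ) ≤ (1 + s) * π := by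
  rw [← integral_mul_one_sub_rpow_neg_half, ← integral_const_mul]
  exact setIntegral_mono_on (integrableOn_rpow_neg_half_mul_one_sub_mul hs0 hs1)
    (integrableOn_mul_one_sub_rpow_neg_half.const_mul _) measurableSet_Ioo
    fun _ ht => rpow_neg_half_le_one_add_mul_of_mem_Ioo hs0 hs1 ht

/-- The denominator `D(s)` of the Schwarz–Christoffel formula `L(s) = π N(s) / D(s)`. -/
noncomputable def scDenominator (s : ℝ) : ℝ :=
  ∫ u in Ioo 0 s, (u * (s - u) * (1 - u)) ^ (-(1/2 : ℝ))

theorem scDenominator_eq_integral_Ioo_zero_one {s : ℝ} (hs0 : 0 < s) (hs1 : s ≤ 1) :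
    scDenominator s = ∫ t in Ioo 0 1, (t * (1 - t) * (1 - s * t)) ^ (-(1/2) : ℝ) := by
  have hcomp : EqOn (fun t => (s * t * (s - s * t) * (1 - s * t)) ^ (-(1/2) : ℝ))
      (fun t => s⁻¹ * (t * (1 - t) * (1 - s * t)) ^ (-(1/2) : ℝ)) (Ioo 0 1) := fun t ht => by
    have hbase : 0 ≤ t * (1 - t) * (1 - s * t) :=
      mul_nonneg (mul_nonneg ht.1.le (by linarith [ht.2])) (by nlinarith [ht.1, ht.2])
    dsimp only
    rw [← mul_self_mul_rpow_neg_half hs0 hbase]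
    congr 1
    ring
  rw [scDenominator, setIntegral_Ioo_zero_eq_smul_comp_mul _ hs0,
    setIntegral_congr_fun measurableSet_Ioo hcomp, integral_const_mul, smul_eq_mul,
    mul_inv_cancel_left₀ hs0.ne']

theorem scDenominator_mem_Icc {s : ℝ} (hs : s ∈ Ioc 0 (1/2)) :
    scDenominator s ∈ Icc π ((1 + s) * π) := by
  rw [scDenominator_eq_integral_Ioo_zero_one hs.1 (by linarith [hs.2])]
  exact ⟨pi_le_integral_rpow_neg_half_mul_one_sub_mul hs.1.le hs.2,
    integral_rpow_neg_half_mul_one_sub_mul_le hs.1.le hs.2⟩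

theorem tendsto_scDenominator_nhdsGT_zero :
    Filter.Tendsto scDenominator (nhdsWithin 0 (Ioi 0)) (nhds π) := by
  have hupper : Filter.Tendsto (fun s : ℝ => (1 + s) * π) (nhdsWithin 0 (Ioi 0)) (nhds π) := by
    have hcont : Continuous fun s : ℝ => (1 + s) * π := by fun_prop
    exact tendsto_nhdsWithin_of_tendsto_nhds (hcont.tendsto' 0 π (by simp))
  have hmem : ∀ᶠ s in nhdsWithin (0:ℝ) (Ioi 0), s ∈ Ioc 0 (1/2) :=
    Ioc_mem_nhdsGT (by norm_num)
  exact tendsto_of_tendsto_of_tendsto_of_le_of_le' tendsto_const_nhds hupper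
    (hmem.mono fun s hs => (scDenominator_mem_Icc hs).1)
    (hmem.mono fun s hs => (scDenominator_mem_Icc hs).2)

/-- The substitution t = u/s gives
∫₀^s (u(s−u)(1−u))^{−1/2} du = ∫₀¹ (t(1−t)(1−st))^{−1/2} dt, and there is C ∈ (0,∞)
with π ≤ D(s) ≤ π + C·s for s ∈ (0,1/2]; in particular D(s) → π as s → 0⁺. -/
theorem stmt_10 :
    (∀ s ∈ Set.Ioo (0:ℝ) 1,
      ∫ u in Set.Ioo (0:ℝ) s, (u * (s - u) * (1 - u)) ^ (-(1/2 : ℝ))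
        = ∫ t in Set.Ioo (0:ℝ) 1, (t * (1 - t) * (1 - s * t)) ^ (-(1/2 : ℝ))) ∧
    (∃ C : ℝ, 0 < C ∧ ∀ s ∈ Set.Ioc (0:ℝ) (1/2),
      Real.pi ≤ (∫ u in Set.Ioo (0:ℝ) s, (u * (s - u) * (1 - u)) ^ (-(1/2 : ℝ))) ∧
      (∫ u in Set.Ioo (0:ℝ) s, (u * (s - u) * (1 - u)) ^ (-(1/2 : ℝ)))
        ≤ Real.pi + C * s) ∧
    Filter.Tendsto
      (fun s : ℝ => ∫ u in Set.Ioo (0:ℝ) s, (u * (s - u) * (1 - u)) ^ (-(1/2 : ℝ)))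
      (nhdsWithin 0 (Set.Ioi 0)) (nhds Real.pi) := by
  refine ⟨fun s hs => scDenominator_eq_integral_Ioo_zero_one hs.1 hs.2.le,
    ⟨π, pi_pos, fun s hs => ?_⟩, tendsto_scDenominator_nhdsGT_zero⟩
  obtain ⟨hlower, hupper⟩ := scDenominator_mem_Icc hs
  exact ⟨hlower, hupper.trans_eq (by ring)⟩
end

section
/- The integral ∫₀^{1/2} t^{−1}·((1−t)^{−1/2} − 1) dt is finite, and lim_{s→0⁺} ∫_s^{1/2} (u·(u−s))^{−1/2}·((1−u)^{−1/2} − 1) du = ∫₀^{1/2} t^{−1}·((1−t)^{−1/2} − 1) dt. -/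
/-!
The change of variables `t = u - s` moves the singularity of `(u (u - s))^{-1/2}` to `t = 0`, so
the integrals become `∫₀^{1/2 - s} ((t + s) t)^{-1/2} g(t + s) dt` with `g u = (1 - u)^{-1/2} - 1`.
Since `0 ≤ g u ≤ 2u` on `[0, 1/2]`, these integrands are dominated by the integrable `2 t^{-1/2}`,
and they converge pointwise to `t⁻¹ g t`; dominated convergence gives the limit.
-/

open MeasureTheory Filter Set Topology

lemma rpow_neg_half_sub_one_nonneg {u : ℝ} (hu₀ : 0 ≤ u) (hu₁ : u < 1) :
    0 ≤ (1 - u) ^ (-(1/2 : ℝ)) - 1 :=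
  sub_nonneg.mpr <| Real.one_le_rpow_of_pos_of_le_one_of_nonpos (by linarith) (by linarith)
    (by norm_num)

lemma rpow_neg_half_sub_one_le {u : ℝ} (hu₀ : 0 ≤ u) (hu₁ : u ≤ 1/2) :
    (1 - u) ^ (-(1/2 : ℝ)) - 1 ≤ 2 * u := by
  have hpos : (0 : ℝ) < 1 - u := by linarith
  rw [Real.rpow_neg hpos.le, ← Real.sqrt_eq_rpow, sub_le_iff_le_add',
    inv_le_iff_one_le_mul₀ (Real.sqrt_pos.mpr hpos)]
  have hsq := Real.sq_sqrt hpos.le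
  have hsqrt := Real.sqrt_nonneg (1 - u)
  -- `(1 + 2u)² (1 - u) = 1 + 3u - 4u³ ≥ 1`
  nlinarith [mul_nonneg hu₀ (sub_nonneg.mpr hu₁), mul_nonneg hu₀ hu₀]

lemma integrableOn_inv_mul_rpow_neg_half_sub_one :
    IntegrableOn (fun t : ℝ => t⁻¹ * ((1 - t) ^ (-(1/2 : ℝ)) - 1)) (Ioo 0 (1/2)) := by
  refine Measure.integrableOn_of_bounded (M := 2) measure_Ioo_lt_top.ne
    (by fun_prop : Measurable _).aestronglyMeasurable ?_
  filter_upwards [ae_restrict_mem measurableSet_Ioo] with t ⟨ht₀, ht₁⟩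
  rw [Real.norm_eq_abs, abs_of_nonneg (mul_nonneg (inv_nonneg.mpr ht₀.le)
    (rpow_neg_half_sub_one_nonneg ht₀.le (by linarith)))]
  calc t⁻¹ * ((1 - t) ^ (-(1/2 : ℝ)) - 1) ≤ t⁻¹ * (2 * t) :=
        mul_le_mul_of_nonneg_left (rpow_neg_half_sub_one_le ht₀.le ht₁.le) (inv_nonneg.mpr ht₀.le)
    _ = 2 := by field_simp

lemma norm_rpow_neg_half_mul_le {u t : ℝ} (hu₀ : 0 < u) (hu₁ : u ≤ 1/2) (ht : 0 < t) :
    ‖(u * t) ^ (-(1/2 : ℝ)) * ((1 - u) ^ (-(1/2 : ℝ)) - 1)‖ ≤ 2 * t ^ (-(1/2 : ℝ)) := by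
  have hg₀ := rpow_neg_half_sub_one_nonneg hu₀.le (by linarith)
  have hu_pow : u ^ (-(1/2 : ℝ)) * u ≤ 1 := by
    rw [← Real.rpow_add_one hu₀.ne']
    exact Real.rpow_le_one hu₀.le (by linarith) (by norm_num)
  rw [Real.norm_eq_abs, abs_of_nonneg (mul_nonneg (by positivity) hg₀), Real.mul_rpow hu₀.le ht.le]
  calc u ^ (-(1/2 : ℝ)) * t ^ (-(1/2 : ℝ)) * ((1 - u) ^ (-(1/2 : ℝ)) - 1)
      ≤ u ^ (-(1/2 : ℝ)) * t ^ (-(1/2 : ℝ)) * (2 * u) :=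
        mul_le_mul_of_nonneg_left (rpow_neg_half_sub_one_le hu₀.le hu₁) (by positivity)
    _ = 2 * t ^ (-(1/2 : ℝ)) * (u ^ (-(1/2 : ℝ)) * u) := by ring
    _ ≤ 2 * t ^ (-(1/2 : ℝ)) := mul_le_of_le_one_right (by positivity) hu_pow

lemma setIntegral_Ioo_comp_add_right {E : Type*} [NormedAddCommGroup E] [NormedSpace ℝ E]
    (f : ℝ → E) (a b s : ℝ) :
    ∫ t in Ioo (a - s) (b - s), f (t + s) = ∫ u in Ioo a b, f u := by
  rw [← preimage_add_const_Ioo]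
  exact (measurePreserving_add_right volume s).setIntegral_preimage_emb
    (measurableEmbedding_addRight s) f _

lemma tendsto_shifted_kernel {t : ℝ} (ht₀ : 0 < t) (ht₁ : t < 1) :
    Tendsto (fun s : ℝ => ((t + s) * t) ^ (-(1/2 : ℝ)) * ((1 - (t + s)) ^ (-(1/2 : ℝ)) - 1))
      (𝓝 0) (𝓝 (t⁻¹ * ((1 - t) ^ (-(1/2 : ℝ)) - 1))) := by
  have hkernel : (t * t) ^ (-(1/2 : ℝ)) = t⁻¹ := by
    rw [← sq, ← Real.rpow_natCast, ← Real.rpow_mul ht₀.le]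
    norm_num [Real.rpow_neg_one]
  have hcont₁ : ContinuousAt (fun s : ℝ => ((t + s) * t) ^ (-(1/2 : ℝ))) 0 :=
    (by fun_prop : ContinuousAt (fun s : ℝ => (t + s) * t) 0).rpow_const
      (Or.inl (by simp [ht₀.ne']))
  have hcont₂ : ContinuousAt (fun s : ℝ => (1 - (t + s)) ^ (-(1/2 : ℝ))) 0 :=
    (by fun_prop : ContinuousAt (fun s : ℝ => 1 - (t + s)) 0).rpow_const
      (Or.inl (by simp [sub_ne_zero.mpr ht₁.ne']))
  simpa only [add_zero, hkernel] using hcont₁.tendsto.mul (hcont₂.tendsto.sub_const 1)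

lemma tendsto_setIntegral_shifted_kernel :
    Tendsto (fun s : ℝ => ∫ t in Ioo 0 (1/2), (Ioo 0 (1/2 - s)).indicator
        (fun t => ((t + s) * t) ^ (-(1/2 : ℝ)) * ((1 - (t + s)) ^ (-(1/2 : ℝ)) - 1)) t)
      (𝓝[>] 0) (𝓝 (∫ t in Ioo 0 (1/2), t⁻¹ * ((1 - t) ^ (-(1/2 : ℝ)) - 1))) := by
  refine tendsto_integral_filter_of_dominated_convergence (fun t => 2 * t ^ (-(1/2 : ℝ)))
    (Eventually.of_forall fun s => (by fun_prop : Measurable _).aestronglyMeasurable.indicator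
      measurableSet_Ioo) ?_ ?_ ?_
  · filter_upwards [self_mem_nhdsWithin] with s (hs : 0 < s)
    filter_upwards [ae_restrict_mem measurableSet_Ioo] with t ht₀
    by_cases ht : t ∈ Ioo 0 (1/2 - s)
    · rw [indicator_of_mem ht]
      exact norm_rpow_neg_half_mul_le (by linarith [ht.1]) (by linarith [ht.2]) ht₀.1
    · rw [indicator_of_notMem ht, norm_zero]
      exact mul_nonneg zero_le_two (Real.rpow_nonneg ht₀.1.le _)
  · have hbound := (intervalIntegral.intervalIntegrable_rpow' (a := 0) (b := 1/2) (r := -(1/2))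
      (by norm_num)).const_mul 2
    exact ((intervalIntegrable_iff_integrableOn_Ioc_of_le (by norm_num)).mp hbound).mono_set
      Ioo_subset_Ioc_self
  · filter_upwards [ae_restrict_mem measurableSet_Ioo] with t ⟨ht₀, ht₁⟩
    refine ((tendsto_shifted_kernel ht₀ (by linarith)).mono_left nhdsWithin_le_nhds).congr' ?_
    filter_upwards [Ioo_mem_nhdsGT (by linarith : (0 : ℝ) < 1/2 - t)] with s hs
    rw [indicator_of_mem (show t ∈ Ioo 0 (1/2 - s) from ⟨ht₀, by linarith [hs.2]⟩)]

/-- ∫₀^{1/2} t^{−1}((1−t)^{−1/2}−1) dt is finite and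
lim_{s→0⁺} ∫_s^{1/2} (u(u−s))^{−1/2}((1−u)^{−1/2}−1) du equals it. -/
theorem stmt_13 :
    IntegrableOn (fun t : ℝ => t⁻¹ * ((1 - t) ^ (-(1/2 : ℝ)) - 1))
      (Set.Ioo (0:ℝ) (1/2)) ∧
    Filter.Tendsto
      (fun s : ℝ => ∫ u in Set.Ioo s (1/2 : ℝ),
        (u * (u - s)) ^ (-(1/2 : ℝ)) * ((1 - u) ^ (-(1/2 : ℝ)) - 1))
      (nhdsWithin 0 (Set.Ioi 0))
      (nhds (∫ t in Set.Ioo (0:ℝ) (1/2), t⁻¹ * ((1 - t) ^ (-(1/2 : ℝ)) - 1))) := by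
  refine ⟨integrableOn_inv_mul_rpow_neg_half_sub_one, tendsto_setIntegral_shifted_kernel.congr' ?_⟩
  filter_upwards [Ioo_mem_nhdsGT (by norm_num : (0 : ℝ) < 1/2)] with s hs
  rw [setIntegral_indicator measurableSet_Ioo,
    inter_eq_right.mpr (Ioo_subset_Ioo_right (by linarith [hs.1])),
    ← setIntegral_Ioo_comp_add_right _ s (1/2) s, sub_self]
  simp only [add_sub_cancel_right]
end
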